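/- arXiv:1912.12706 — 10 statements merged into one kernel-verified Lean document; each statement's English description precedes it below -/
import Mathlib

section
/- If X is a Hausdorff pseudoradial space, then the tightness of X is at most L(X) · F(X), where L(X) is the Lindelöf degree and F(X) is the supremum of cardinalities of free sequences in X. -/
open Cardinal Set TopologicalSpace

universe u

/-- A transfinite sequence indexed by a linearly ordered type is *free* if for every index `i`,
the closure of the initial segment `{x j : j < i}` is disjoint from the closure of the
final segment `{x j : i ≤ j}`. -/
def IsFreeSeq {X : Type u} [TopologicalSpace X] {ι : Type u} [LinearOrder ι] (x : ι → X) :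
    Prop :=
  ∀ i : ι, closure (x '' {j | j < i}) ∩ closure (x '' {j | i ≤ j}) = ∅

/-- `F(X)`: the supremum (together with `ℵ₀`) of the cardinalities (= lengths) of free
sequences in `X`, free sequences being indexed by ordinals. -/
noncomputable def freeSup (X : Type u) [TopologicalSpace X] : Cardinal.{u} :=
  ℵ₀ ⊔ sSup {c : Cardinal.{u} |
    ∃ (o : Ordinal.{u}) (x : o.ToType → X), IsFreeSeq x ∧ c = o.card}

/-- The Lindelöf degree `L(X)`: the least infinite cardinal `κ` such that every open cover
of `X` has a subcover of size at most `κ`. -/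
noncomputable def LindelofDeg (X : Type u) [TopologicalSpace X] : Cardinal.{u} :=
  sInf {κ : Cardinal.{u} | ℵ₀ ≤ κ ∧ ∀ U : Set (Set X), (∀ u ∈ U, IsOpen u) →
    ⋃₀ U = Set.univ → ∃ V ⊆ U, #V ≤ κ ∧ ⋃₀ V = Set.univ}

/-- The tightness `t(X)`: the least infinite cardinal `κ` such that whenever `p ∈ closure A`
there is `B ⊆ A` with `|B| ≤ κ` and `p ∈ closure B`. -/
noncomputable def tightnessCard (X : Type u) [TopologicalSpace X] : Cardinal.{u} :=
  sInf {κ : Cardinal.{u} | ℵ₀ ≤ κ ∧ ∀ (A : Set X) (p : X), p ∈ closure A →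
    ∃ B ⊆ A, #B ≤ κ ∧ p ∈ closure B}

/-- The set-tightness `t_s(X)`: the least infinite cardinal `κ` such that for every non-closed
`A` and `p ∈ closure A \ A` there is a `≤ κ`-sized family of subsets of `A` whose union has
`p` in its closure while no member does. -/
noncomputable def setTightness (X : Type u) [TopologicalSpace X] : Cardinal.{u} :=
  sInf {κ : Cardinal.{u} | ℵ₀ ≤ κ ∧ ∀ (A : Set X) (p : X), p ∈ closure A \ A →
    ∃ (ι : Type u) (B : ι → Set X), #ι ≤ κ ∧ (∀ i, B i ⊆ A) ∧
      p ∈ closure (⋃ i, B i) ∧ ∀ i, p ∉ closure (B i)}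

/-- A transfinite sequence `x` converges to `p` if every open neighbourhood of `p` contains
a final segment of the sequence. -/
def ConvergesTo {X : Type u} [TopologicalSpace X] {ι : Type u} [LinearOrder ι]
    (x : ι → X) (p : X) : Prop :=
  ∀ V : Set X, IsOpen V → p ∈ V → ∃ b : ι, ∀ a : ι, b ≤ a → x a ∈ V

/-- A sequence converging to `p` is *thin* if `p` is not in the closure of any proper
initial segment. -/
def IsThin {X : Type u} [TopologicalSpace X] {ι : Type u} [LinearOrder ι]
    (x : ι → X) (p : X) : Prop :=
  ∀ i : ι, p ∉ closure (x '' {j | j < i})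

/-- `X` is pseudoradial if every non-closed set contains a transfinite sequence converging
to a point of its closure outside of it. -/
def IsPseudoradial (X : Type u) [TopologicalSpace X] : Prop :=
  ∀ A : Set X, ¬ IsClosed A → ∃ p ∈ closure A \ A, ∃ (o : Ordinal.{u}) (x : o.ToType → X),
    (∀ i, x i ∈ A) ∧ ConvergesTo x p

/-- `X` is almost radial if every non-closed set contains a thin transfinite sequence
converging to a point of its closure outside of it. -/
def IsAlmostRadial (X : Type u) [TopologicalSpace X] : Prop :=
  ∀ A : Set X, ¬ IsClosed A → ∃ p ∈ closure A \ A, ∃ (o : Ordinal.{u}) (x : o.ToType → X),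
    (∀ i, x i ∈ A) ∧ ConvergesTo x p ∧ IsThin x p

/-- `X` is radial if for every non-closed set `A` and every point `p ∈ closure A \ A` there is
a transfinite sequence in `A` converging to `p`. -/
def IsRadial (X : Type u) [TopologicalSpace X] : Prop :=
  ∀ A : Set X, ¬ IsClosed A → ∀ p ∈ closure A \ A, ∃ (o : Ordinal.{u}) (x : o.ToType → X),
    (∀ i, x i ∈ A) ∧ ConvergesTo x p

/-- The radial character `σ_C(X)`: the least infinite cardinal `κ` such that every non-closed
set contains a thin transfinite sequence of length at most `κ` converging outside. -/
noncomputable def radialChar (X : Type u) [TopologicalSpace X] : Cardinal.{u} :=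
  sInf {κ : Cardinal.{u} | ℵ₀ ≤ κ ∧ ∀ A : Set X, ¬ IsClosed A →
    ∃ p ∈ closure A \ A, ∃ (o : Ordinal.{u}) (x : o.ToType → X),
      o.card ≤ κ ∧ (∀ i, x i ∈ A) ∧ ConvergesTo x p ∧ IsThin x p}

/-- The `G_δ`-modification of the topology of `X`: the topology generated by the countable
intersections of open sets. -/
def GdeltaTop (X : Type u) [TopologicalSpace X] : TopologicalSpace X :=
  generateFrom {s : Set X | ∃ f : ℕ → Set X, (∀ n, IsOpen (f n)) ∧ s = ⋂ n, f n}

/-!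
Let `κ = L(X) · F(X)` and let `[A]_κ` be the union of the closures of the subsets of `A` of
size at most `κ`. It contains `A` and contains the closure of each of its own subsets of size
at most `κ`, so it suffices to show that it is closed. Otherwise pseudoradiality gives a
transfinite sequence in `[A]_κ` converging to some `q ∉ [A]_κ`; then `q` is in the closure of
no `κ`-sized part of the sequence, so every `κ`-sized set of indices is bounded. With the
Lindelöf property and the Hausdorff separation this lets one push a tail of the sequence away
from the closure of any `κ`-sized part of it, and a recursion of length `κ⁺` extracts a free
subsequence of length `κ⁺ > F(X)`, which is absurd.
-/

section

variable {X : Type u} [TopologicalSpace X]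

theorem IsFreeSeq.injective {ι : Type u} [LinearOrder ι] {x : ι → X} (hx : IsFreeSeq x) :
    Function.Injective x := by
  have hne : ∀ a b : ι, a < b → x a ≠ x b := fun a b hab heq =>
    (Set.eq_empty_iff_forall_notMem.1 (hx b)) (x a)
      ⟨subset_closure (mem_image_of_mem x hab), heq ▸ subset_closure (mem_image_of_mem x le_rfl)⟩
  exact Function.Injective.of_lt_imp_ne hne

theorem card_le_freeSup {o : Ordinal.{u}} {x : o.ToType → X} (hx : IsFreeSeq x) :
    o.card ≤ freeSup X := by
  have hbdd : BddAbove {c : Cardinal.{u} |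
      ∃ (o : Ordinal.{u}) (x : o.ToType → X), IsFreeSeq x ∧ c = o.card} := by
    refine ⟨#X, ?_⟩
    rintro c ⟨o', x', hx', rfl⟩
    rw [← Cardinal.mk_toType]
    exact Cardinal.mk_le_of_injective hx'.injective
  exact (le_csSup hbdd ⟨o, x, hx, rfl⟩).trans le_sup_right

theorem isFreeSeq_comp_of_monotone {ι I : Type u} [LinearOrder ι] [LinearOrder I] {x : ι → X}
    {f : I → ι} (hf : Monotone f)
    (hsep : ∀ i, Disjoint (closure (x '' Ici (f i))) (closure (x '' (f '' Iio i)))) :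
    IsFreeSeq (x ∘ f) := by
  intro i
  have htail : (x ∘ f) '' {j | i ≤ j} ⊆ x '' Ici (f i) := by
    rintro - ⟨j, hj, rfl⟩
    exact ⟨f j, hf hj, rfl⟩
  rw [← disjoint_iff_inter_eq_empty, image_comp]
  exact ((hsep i).mono_left (closure_mono htail)).symm

theorem lindelofDeg_mem :
    LindelofDeg X ∈ {κ : Cardinal.{u} | ℵ₀ ≤ κ ∧ ∀ U : Set (Set X), (∀ u ∈ U, IsOpen u) →
      ⋃₀ U = Set.univ → ∃ V ⊆ U, #V ≤ κ ∧ ⋃₀ V = Set.univ} := by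
  refine csInf_mem ⟨ℵ₀ ⊔ #(Set X), le_sup_left, fun U _ hU => ⟨U, subset_rfl, ?_, hU⟩⟩
  exact (Cardinal.mk_set_le U).trans (le_max_right _ _)

theorem aleph0_le_lindelofDeg : ℵ₀ ≤ LindelofDeg X :=
  (lindelofDeg_mem (X := X)).1

theorem IsClosed.exists_subcover_card_le_lindelofDeg {C : Set X} (hC : IsClosed C)
    {U : Set (Set X)} (hU : ∀ u ∈ U, IsOpen u) (hCU : C ⊆ ⋃₀ U) :
    ∃ V ⊆ U, #V ≤ LindelofDeg X ∧ C ⊆ ⋃₀ V := by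
  have hopen : ∀ u ∈ insert Cᶜ U, IsOpen u := by
    rintro u (rfl | hu)
    exacts [hC.isOpen_compl, hU u hu]
  have hcover : ⋃₀ insert Cᶜ U = Set.univ := by
    rw [sUnion_insert, Set.eq_univ_iff_forall]
    intro y
    by_cases hy : y ∈ C
    exacts [Or.inr (hCU hy), Or.inl hy]
  obtain ⟨V, hVU, hVcard, hV⟩ := lindelofDeg_mem.2 _ hopen hcover
  refine ⟨V ∩ U, inter_subset_right, (Cardinal.mk_le_mk_of_subset inter_subset_left).trans hVcard,
    fun y hy => ?_⟩
  obtain ⟨v, hv, hyv⟩ := mem_sUnion.1 (hV ▸ Set.mem_univ y : y ∈ ⋃₀ V)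
  have hvU : v ∈ U := (hVU hv).resolve_left (by rintro rfl; exact hyv hy)
  exact ⟨v, ⟨hv, hvU⟩, hyv⟩

theorem exists_strictMono_of_forall_exists_gt {I J : Type u} [LinearOrder I] [WellFoundedLT I]
    [Preorder J] (P : Set J → J → Prop) {κ : Cardinal.{u}} (hI : ∀ i : I, #(Iio i) ≤ κ)
    (hstep : ∀ s : Set J, #s ≤ κ → ∃ t, (∀ j ∈ s, j < t) ∧ P s t) :
    ∃ f : I → J, StrictMono f ∧ ∀ i, P (f '' Iio i) (f i) := by
  have : Nonempty J := let ⟨t, _⟩ := hstep ∅ (by simp); ⟨t⟩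
  choose! next hnext_gt hnext using hstep
  let f : I → J := wellFounded_lt.fix fun i rec => next (range fun j : Iio i => rec j j.2)
  have hf : ∀ i, f i = next (f '' Iio i) := fun i => by
    rw [image_eq_range]
    exact wellFounded_lt.fix_eq _ i
  have hsmall : ∀ i, #(f '' Iio i) ≤ κ := fun i => Cardinal.mk_image_le.trans (hI i)
  refine ⟨f, fun a b hab => ?_, fun i => hf i ▸ hnext _ (hsmall i)⟩
  rw [hf b]
  exact hnext_gt _ (hsmall b) _ (mem_image_of_mem f hab)

section Convergence

variable {ι : Type u} [LinearOrder ι] {x : ι → X} {q : X}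

theorem ConvergesTo.exists_gt_of_notMem_closure (hx : ConvergesTo x q) {S : Set ι}
    (hS : q ∉ closure (x '' S)) : ∃ t, ∀ s ∈ S, s < t := by
  by_contra! hcofinal
  refine hS (mem_closure_iff.2 fun V hV hqV => ?_)
  obtain ⟨b, hb⟩ := hx V hV hqV
  obtain ⟨s, hs, hbs⟩ := hcofinal b
  exact ⟨x s, hb s hbs, mem_image_of_mem x hs⟩

theorem ConvergesTo.exists_disjoint_closure_tail [T2Space X] (hx : ConvergesTo x q)
    (hbdd : ∀ S : Set ι, #S ≤ LindelofDeg X → ∃ t, ∀ s ∈ S, s < t)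
    {C : Set X} (hC : IsClosed C) (hqC : q ∉ C) :
    ∃ b, Disjoint (closure (x '' Ici b)) C := by
  -- `C` is covered by open sets each missed by a tail; `L(X)` of them suffice.
  set U := {u : Set X | IsOpen u ∧ ∃ b, ∀ j, b ≤ j → x j ∉ u}
  have hCU : C ⊆ ⋃₀ U := by
    intro z hz
    obtain ⟨u, w, hu, hw, hzu, hqw, huw⟩ := t2_separation (ne_of_mem_of_not_mem hz hqC)
    obtain ⟨b, hb⟩ := hx w hw hqw
    exact ⟨u, ⟨hu, b, fun j hj hxj => huw.le_bot ⟨hxj, hb j hj⟩⟩, hzu⟩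
  obtain ⟨V, hVU, hVcard, hCV⟩ :=
    hC.exists_subcover_card_le_lindelofDeg (fun u hu => hu.1) hCU
  have : Nonempty ι := let ⟨t, _⟩ := hbdd ∅ (by simp); ⟨t⟩
  choose! start hstart using fun v (hv : v ∈ V) => (hVU hv).2
  obtain ⟨t, ht⟩ := hbdd (start '' V) (Cardinal.mk_image_le.trans hVcard)
  have htail : x '' Ici t ⊆ ⋂ v ∈ V, vᶜ := by
    rintro - ⟨j, hj, rfl⟩
    exact mem_iInter₂.2 fun v hv =>
      hstart v hv j ((ht _ (mem_image_of_mem start hv)).le.trans hj)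
  have hclosed : IsClosed (⋂ v ∈ V, vᶜ) :=
    isClosed_biInter fun v hv => (hVU hv).1.isClosed_compl
  refine ⟨t, disjoint_left.2 fun y hy hyC => ?_⟩
  obtain ⟨v, hv, hyv⟩ := hCV hyC
  exact mem_iInter₂.1 (closure_minimal htail hclosed hy) v hv hyv

theorem ConvergesTo.lt_freeSup [T2Space X] (hx : ConvergesTo x q) {κ : Cardinal.{u}}
    (hLκ : LindelofDeg X ≤ κ) (hsmall : ∀ S : Set ι, #S ≤ κ → q ∉ closure (x '' S)) :
    κ < freeSup X := by
  have hκ : ℵ₀ ≤ κ := aleph0_le_lindelofDeg.trans hLκ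
  have hbdd : ∀ S : Set ι, #S ≤ κ → ∃ t, ∀ s ∈ S, s < t := fun S hS =>
    hx.exists_gt_of_notMem_closure (hsmall S hS)
  have hstep : ∀ s : Set ι, #s ≤ κ →
      ∃ t, (∀ j ∈ s, j < t) ∧ Disjoint (closure (x '' Ici t)) (closure (x '' s)) := by
    intro s hs
    obtain ⟨b, hb⟩ := hx.exists_disjoint_closure_tail (fun S hS => hbdd S (hS.trans hLκ))
      isClosed_closure (hsmall s hs)
    have hcard : #(insert b s : Set ι) ≤ κ :=
      Cardinal.mk_insert_le.trans <|
        (add_le_add hs (Cardinal.one_le_aleph0.trans hκ)).trans (Cardinal.add_eq_self hκ).le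
    obtain ⟨t, ht⟩ := hbdd _ hcard
    have hbt : Ici t ⊆ Ici b := Ici_subset_Ici.2 (ht b (mem_insert b s)).le
    exact ⟨t, fun j hj => ht j (mem_insert_of_mem b hj),
      hb.mono_left (closure_mono (image_mono hbt))⟩
  obtain ⟨f, hf, hfree⟩ := exists_strictMono_of_forall_exists_gt
    (I := (Order.succ κ).ord.ToType) _
    (fun i => Order.lt_succ_iff.1 (by simpa using Cardinal.mk_Iio_lt i (by simp))) hstep
  have hsucc := card_le_freeSup (isFreeSeq_comp_of_monotone hf.monotone hfree)
  rw [Cardinal.card_ord] at hsucc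
  exact (Order.lt_succ κ).trans_le hsucc

end Convergence

section KappaClosure

def kappaClosure (κ : Cardinal.{u}) (A : Set X) : Set X :=
  {y | ∃ B ⊆ A, #B ≤ κ ∧ y ∈ closure B}

variable {κ : Cardinal.{u}} {A : Set X}

theorem subset_kappaClosure (hκ : 1 ≤ κ) : A ⊆ kappaClosure κ A := fun a ha =>
  ⟨{a}, singleton_subset_iff.2 ha, (Cardinal.mk_singleton a).trans_le hκ, subset_closure rfl⟩

theorem closure_subset_kappaClosure (hκ : ℵ₀ ≤ κ) {S : Set X} (hSA : S ⊆ kappaClosure κ A)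
    (hSκ : #S ≤ κ) : closure S ⊆ kappaClosure κ A := by
  choose B hBA hBκ hB using fun s : S => hSA s.2
  have hcard : #(⋃ s, B s) ≤ κ :=
    calc #(⋃ s, B s) ≤ #S * ⨆ s, #(B s) := Cardinal.mk_iUnion_le B
      _ ≤ κ * κ := mul_le_mul' hSκ (ciSup_le' hBκ)
      _ = κ := Cardinal.mul_eq_self hκ
  have hS : S ⊆ closure (⋃ s, B s) := fun s hs =>
    closure_mono (subset_iUnion B ⟨s, hs⟩) (hB ⟨s, hs⟩)
  exact fun y hy => ⟨⋃ s, B s, iUnion_subset hBA, hcard, closure_minimal hS isClosed_closure hy⟩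

end KappaClosure

end

/-- for a Hausdorff pseudoradial space, `t(X) ≤ L(X) · F(X)`. -/
theorem tightness_le_mul_of_pseudoradial {X : Type u} [TopologicalSpace X] [T2Space X]
    (hX : IsPseudoradial X) :
    tightnessCard X ≤ LindelofDeg X * freeSup X := by
  set κ := LindelofDeg X * freeSup X
  have hκ_max : κ = max (LindelofDeg X) (freeSup X) :=
    Cardinal.mul_eq_max aleph0_le_lindelofDeg le_sup_left
  have hLκ : LindelofDeg X ≤ κ := hκ_max ▸ le_max_left _ _
  have hFκ : freeSup X ≤ κ := hκ_max ▸ le_max_right _ _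
  have hκ : ℵ₀ ≤ κ := aleph0_le_lindelofDeg.trans hLκ
  refine csInf_le' ⟨hκ, fun A p hp => ?_⟩
  suffices IsClosed (kappaClosure κ A) from
    closure_minimal (subset_kappaClosure (Cardinal.one_le_aleph0.trans hκ)) this hp
  by_contra hnc
  obtain ⟨q, ⟨-, hq⟩, o, x, hxA, hx⟩ := hX _ hnc
  have hsmall : ∀ S : Set o.ToType, #S ≤ κ → q ∉ closure (x '' S) := fun S hS hqS =>
    hq <| closure_subset_kappaClosure hκ (image_subset_iff.2 fun i _ => hxA i)
      (Cardinal.mk_image_le.trans hS) hqS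
  exact (hx.lt_freeSup hLκ hsmall).not_ge hFκ
end

section
/- If X is a Lindelöf Hausdorff pseudoradial space, then t(X) = F(X): the tightness of X equals the supremum of cardinalities of free sequences in X. -/
open Cardinal Set TopologicalSpace

universe u

/-! ### Auxiliary lemmas -/

/-- A subset of `o.ToType` of cardinality less than the cofinality of `o` is bounded above. -/
lemma exists_ub_of_card_lt_cof {o : Ordinal.{u}} (S : Set o.ToType) (h : #S < o.cof) :
    ∃ a : o.ToType, ∀ b ∈ S, b ≤ a := by
  by_contra hne
  push_neg at hne
  have hcf : IsCofinal S := by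
    intro a
    obtain ⟨b, hb, hab⟩ := hne a
    exact ⟨b, hb, hab.le⟩
  have := Order.cof_le hcf
  rw [Ordinal.cof_toType] at this
  exact absurd h (not_lt.2 this)

/-- The easy inequality: in a Lindelöf space, every free sequence has length at most the
tightness. -/
lemma free_card_le {X : Type u} [TopologicalSpace X] [LindelofSpace X]
    {t : Cardinal.{u}} (ht : ℵ₀ ≤ t)
    (htp : ∀ (A : Set X) (p : X), p ∈ closure A → ∃ B ⊆ A, #B ≤ t ∧ p ∈ closure B)
    (o : Ordinal.{u}) (x : o.ToType → X) (hx : IsFreeSeq x) : o.card ≤ t := by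
  by_contra hlt
  push_neg at hlt
  set μ : Ordinal.{u} := (Order.succ t).ord with hμdef
  have hμo : μ ≤ o := by rw [hμdef, Cardinal.ord_le]; exact Order.succ_le_of_lt hlt
  have hμcard : μ.card = Order.succ t := Cardinal.card_ord _
  have hμinf : ℵ₀ ≤ Order.succ t := ht.trans (Order.le_succ t)
  let f := Ordinal.initialSegToType hμo
  have hflt : ∀ {a b : μ.ToType}, a < b → f a < f b := fun h => f.map_rel_iff.2 h
  have hfle : ∀ {a b : μ.ToType}, a ≤ b → f a ≤ f b := by
    intro a b h
    rcases h.lt_or_eq with h | h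
    · exact (hflt h).le
    · exact h ▸ le_rfl
  set y : μ.ToType → X := fun i => x (f i) with hy
  have hyfree : IsFreeSeq y := by
    intro i
    apply Set.subset_empty_iff.1
    have h1 : y '' {j | j < i} ⊆ x '' {δ | δ < f i} := by
      rintro _ ⟨j, hj, rfl⟩; exact ⟨f j, hflt hj, rfl⟩
    have h2 : y '' {j | i ≤ j} ⊆ x '' {δ | f i ≤ δ} := by
      rintro _ ⟨j, hj, rfl⟩; exact ⟨f j, hfle hj, rfl⟩
    calc closure (y '' {j | j < i}) ∩ closure (y '' {j | i ≤ j})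
        ⊆ closure (x '' {δ | δ < f i}) ∩ closure (x '' {δ | f i ≤ δ}) :=
          Set.inter_subset_inter (closure_mono h1) (closure_mono h2)
      _ = ∅ := hx (f i)
  have key : ∀ {a b : μ.ToType}, a < b → y a ≠ y b := by
    intro a b hab' heq
    have h1 : y a ∈ closure (y '' {j | j < b}) := subset_closure ⟨a, hab', rfl⟩
    have h2 : y a ∈ closure (y '' {j | b ≤ j}) := by
      rw [heq]
      have hmem : y b ∈ y '' {j | b ≤ j} := ⟨b, le_refl b, rfl⟩
      exact subset_closure hmem
    have h3 := hyfree b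
    exact absurd (Set.mem_inter h1 h2) (by rw [h3]; exact Set.notMem_empty _)
  have hyinj : Function.Injective y := by
    intro a b hab
    rcases lt_trichotomy a b with h | h | h
    · exact absurd hab (key h)
    · exact h
    · exact absurd hab.symm (key h)
  set S := Set.range y with hS
  have hScard : #S = Order.succ t := by
    rw [hS, Cardinal.mk_range_eq _ hyinj, Cardinal.mk_toType, hμcard]
  -- a "complete accumulation point" of `S`
  have hcap : ∃ p : X, ∀ U : Set X, IsOpen U → p ∈ U → ¬(#(U ∩ S : Set X) ≤ t) := by
    by_contra hc
    push_neg at hc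
    choose U hUo hUp hUc using hc
    obtain ⟨c, hcc, hccov⟩ := isLindelof_univ.elim_countable_subcover U hUo
      (fun z _ => Set.mem_iUnion.2 ⟨z, hUp z⟩)
    haveI := hcc.to_subtype
    have h1 : S ⊆ ⋃ p : c, (U p ∩ S) := by
      intro z hz
      obtain ⟨pp, hpc, hzU⟩ := Set.mem_iUnion₂.1 (hccov (Set.mem_univ z))
      exact Set.mem_iUnion.2 ⟨⟨pp, hpc⟩, hzU, hz⟩
    have h2 : #S ≤ Cardinal.sum (fun p : c => #(U p ∩ S : Set X)) :=
      le_trans (Cardinal.mk_le_mk_of_subset h1) Cardinal.mk_iUnion_le_sum_mk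
    have h3 : Cardinal.sum (fun p : c => #(U p ∩ S : Set X))
        ≤ Cardinal.sum (fun _ : c => t) := Cardinal.sum_le_sum _ _ (fun p => hUc p)
    have h4 : Cardinal.sum (fun _ : c => t) = #c * t := Cardinal.sum_const' _ _
    have h5 : #c * t ≤ ℵ₀ * t := mul_le_mul' Cardinal.mk_le_aleph0 le_rfl
    have h6 : (ℵ₀ : Cardinal) * t ≤ t := by
      rw [Cardinal.mul_eq_max le_rfl ht]
      exact max_le ht le_rfl
    have h7 : #S ≤ t := le_trans (le_trans (le_trans h2 h3) (h4 ▸ h5)) h6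
    rw [hScard] at h7
    exact (Order.lt_succ t).not_ge h7
  obtain ⟨p, hp⟩ := hcap
  have hpS : p ∈ closure S := by
    rw [mem_closure_iff]
    intro V hV hpV
    rcases Set.eq_empty_or_nonempty (V ∩ S) with h | h
    · exact absurd (by rw [h]; simp) (hp V hV hpV)
    · exact h
  obtain ⟨B, hBS, hBc, hpB⟩ := htp S p hpS
  set I : Set μ.ToType := {j | y j ∈ B} with hI
  have hIcard : #I ≤ t := by
    have hinj : Function.Injective (fun j : I => (⟨y j.1, j.2⟩ : B)) := by
      intro a b hab
      exact Subtype.ext (hyinj (congrArg Subtype.val hab))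
    exact (Cardinal.mk_le_of_injective hinj).trans hBc
  have hIlt : #I < μ.cof := by
    have hreg : μ.cof = Order.succ t := (Cardinal.isRegular_succ ht).cof_eq
    rw [hreg]
    exact hIcard.trans_lt (Order.lt_succ t)
  obtain ⟨β, hβ⟩ := exists_ub_of_card_lt_cof I hIlt
  have hlim : Order.IsSuccLimit μ := Cardinal.isSuccLimit_ord hμinf
  -- a strict upper bound
  obtain ⟨β', hββ'⟩ : ∃ β' : μ.ToType, β < β' := by
    set e := Ordinal.ToType.mk (o := μ) with he
    refine ⟨e ⟨Order.succ (e.symm β).1, Set.mem_Iio.mpr (hlim.succ_lt (Set.mem_Iio.mp (e.symm β).2))⟩, ?_⟩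
    conv_lhs => rw [← e.apply_symm_apply β]
    rw [e.lt_iff_lt]
    exact Subtype.coe_lt_coe.mp (Order.lt_succ _)
  have hB1 : B ⊆ y '' {j | j < β'} := by
    intro b hb
    obtain ⟨j, rfl⟩ := hBS hb
    exact ⟨j, lt_of_le_of_lt (hβ j hb) hββ', rfl⟩
  have hp1 : p ∈ closure (y '' {j | j < β'}) := closure_mono hB1 hpB
  have hinit : #(y '' {j | j < β'} : Set X) ≤ t := by
    haveI : IsWellOrder μ.ToType (· < ·) := isWellOrder_lt
    calc #(y '' {j | j < β'} : Set X) ≤ #{j : μ.ToType | j < β'} := Cardinal.mk_image_le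
      _ = (Ordinal.typein (α := μ.ToType) (· < ·) β').card :=
        Ordinal.card_typein (r := ((· < ·) : μ.ToType → μ.ToType → Prop)) β'
      _ ≤ t := by
        have h1 : Ordinal.typein (α := μ.ToType) (· < ·) β' < μ := Ordinal.typein_lt_self β'
        exact Order.lt_succ_iff.1 (Cardinal.lt_ord.1 h1)
  have hp2 : p ∈ closure (y '' {j | β' ≤ j}) := by
    rw [mem_closure_iff]
    intro V hV hpV
    have hVS := hp V hV hpV
    have hns : ¬(V ∩ S ⊆ y '' {j | j < β'}) := fun hsub =>
      hVS ((Cardinal.mk_le_mk_of_subset hsub).trans hinit)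
    obtain ⟨z, hzVS, hznot⟩ := Set.not_subset.1 hns
    obtain ⟨j, rfl⟩ := hzVS.2
    have hjβ : β' ≤ j := not_lt.1 (fun hj => hznot ⟨j, hj, rfl⟩)
    exact ⟨y j, hzVS.1, ⟨j, hjβ, rfl⟩⟩
  exact absurd (Set.mem_inter hp1 hp2) (by rw [hyfree β']; exact Set.notMem_empty _)

/-- The hard inequality: in a Lindelöf Hausdorff pseudoradial space, if every free sequence
has length at most `κ` then `κ` witnesses the tightness. -/
lemma hard_tightness {X : Type u} [TopologicalSpace X] [T2Space X] [LindelofSpace X]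
    (hX : IsPseudoradial X) {κ : Cardinal.{u}} (hκ : ℵ₀ ≤ κ)
    (hF : ∀ (o : Ordinal.{u}) (x : o.ToType → X), IsFreeSeq x → o.card ≤ κ) :
    ∀ (A : Set X) (p : X), p ∈ closure A → ∃ B ⊆ A, #B ≤ κ ∧ p ∈ closure B := by
  intro A p hp
  by_contra hcon
  push_neg at hcon
  classical
  -- the κ-closure of A
  set A' : Set X := {z | ∃ B ⊆ A, #B ≤ κ ∧ z ∈ closure B} with hA'
  have kclosed : ∀ D ⊆ A', #D ≤ κ → closure D ⊆ A' := by
    intro D hD hDc z hz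
    rcases isEmpty_or_nonempty D with hDe | hDn
    · rw [Set.isEmpty_coe_sort.mp hDe] at hz
      simp at hz
    · choose B hBA hBc hBcl using fun d : D => hD d.2
      set W : Set X := ⋃ d : D, B d with hW
      have hWA : W ⊆ A := Set.iUnion_subset hBA
      have hWc : #W ≤ κ := by
        calc #W ≤ #D * ⨆ d : D, #(B d) := Cardinal.mk_iUnion_le _
          _ ≤ κ * κ := mul_le_mul' hDc (ciSup_le' hBc)
          _ = κ := Cardinal.mul_eq_self hκ
      have hDW : D ⊆ closure W := fun d hd =>
        closure_mono (Set.subset_iUnion (fun d : D => B d) ⟨d, hd⟩) (hBcl ⟨d, hd⟩)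
      have hzW : z ∈ closure W := by
        have h1 : closure D ⊆ closure W := by
          rw [← closure_closure (s := W)]
          exact closure_mono hDW
        exact h1 hz
      exact ⟨W, hWA, hWc, hzW⟩
  have hAA' : A ⊆ A' := by
    intro a ha
    refine ⟨{a}, Set.singleton_subset_iff.2 ha, ?_, subset_closure rfl⟩
    simpa using Cardinal.one_le_aleph0.trans hκ
  have hpA' : p ∈ closure A' := closure_mono hAA' hp
  have hpnA' : p ∉ A' := by
    rintro ⟨B, hBA, hBc, hpB⟩
    exact hcon B hBA hBc hpB
  have hA'nc : ¬ IsClosed A' := by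
    intro hcl
    exact hpnA' (hcl.closure_subset hpA')
  obtain ⟨q, hq, o, x, hxA', hconv⟩ := hX A' hA'nc
  have hqB : ∀ D ⊆ A', #D ≤ κ → q ∉ closure D := fun D h1 h2 hq' =>
    hq.2 (kclosed D h1 h2 hq')
  have hone : Nonempty o.ToType := by
    obtain ⟨b, -⟩ := hconv Set.univ isOpen_univ (Set.mem_univ q)
    exact ⟨b⟩
  set T : o.ToType → Set X := fun γ => x '' {δ | γ ≤ δ} with hT
  have hTA' : ∀ γ, T γ ⊆ A' := by rintro γ _ ⟨δ, -, rfl⟩; exact hxA' δ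
  have hTanti : ∀ {γ γ' : o.ToType}, γ ≤ γ' → T γ' ⊆ T γ := by
    rintro γ γ' hγ _ ⟨δ, hδ, rfl⟩
    exact ⟨δ, hγ.trans hδ, rfl⟩
  have hK : ∀ r : X, r ≠ q → ∃ γ, r ∉ closure (T γ) := by
    intro r hr
    obtain ⟨U, V, hU, hV, hrU, hqV, hUV⟩ := t2_separation hr
    obtain ⟨b, hb⟩ := hconv V hV hqV
    refine ⟨b, fun hmem => ?_⟩
    have hsub : closure (T b) ⊆ Uᶜ := by
      apply closure_minimal ?_ hU.isClosed_compl
      rintro _ ⟨δ, hδ, rfl⟩ hxU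
      exact Set.disjoint_left.1 hUV hxU (hb δ hδ)
    exact hsub hmem hrU
  -- the cofinality of o is large
  have hcof : κ < o.cof := by
    by_contra hle
    push_neg at hle
    haveI : IsWellOrder o.ToType (· < ·) := isWellOrder_lt
    obtain ⟨S, hSunb, hScard⟩ :=
      Order.exists_cof_eq o.ToType
    have hBsub : x '' S ⊆ A' := by rintro _ ⟨s, -, rfl⟩; exact hxA' s
    have hBcard : #(x '' S : Set X) ≤ κ := by
      refine Cardinal.mk_image_le.trans ?_
      rw [hScard, Ordinal.cof_toType]
      exact hle
    have hqcl : q ∈ closure (x '' S) := by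
      rw [mem_closure_iff]
      intro V hV hqV
      obtain ⟨b, hb⟩ := hconv V hV hqV
      obtain ⟨s, hsS, hs⟩ := hSunb b
      exact ⟨x s, hb s hs, Set.mem_image_of_mem x hsS⟩
    exact hqB _ hBsub hBcard hqcl
  -- key lemma: closed sets missing q are eventually disjoint from tails
  have lemA : ∀ C : Set X, IsClosed C → q ∉ C → ∃ γ, C ∩ closure (T γ) = ∅ := by
    intro C hC hqC
    by_contra hall
    push_neg at hall
    set U : o.ToType → Set X := fun γ => Cᶜ ∪ (closure (T γ))ᶜ with hU
    have hUopen : ∀ γ, IsOpen (U γ) :=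
      fun γ => hC.isOpen_compl.union isClosed_closure.isOpen_compl
    have hUcov : (Set.univ : Set X) ⊆ ⋃ γ, U γ := by
      intro r _
      by_cases hrC : r ∈ C
      · have hrq : r ≠ q := fun h => hqC (h ▸ hrC)
        obtain ⟨γ, hγ⟩ := hK r hrq
        exact Set.mem_iUnion.2 ⟨γ, Or.inr hγ⟩
      · exact Set.mem_iUnion.2 ⟨hone.some, Or.inl hrC⟩
    obtain ⟨tt, htc, htcov⟩ := isLindelof_univ.elim_countable_subcover U hUopen hUcov
    haveI := htc.to_subtype
    have htcard : #tt ≤ κ := Cardinal.mk_le_aleph0.trans hκ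
    obtain ⟨γ₂, hγ₂⟩ := exists_ub_of_card_lt_cof tt (htcard.trans_lt hcof)
    obtain ⟨r, hrC, hrT⟩ := hall γ₂
    obtain ⟨γ, hγt, hrU⟩ := Set.mem_iUnion₂.1 (htcov (Set.mem_univ r))
    rcases hrU with h | h
    · exact h hrC
    · exact h (closure_mono (hTanti (hγ₂ γ hγt)) hrT)
  -- construct a free sequence of length κ⁺ by transfinite recursion
  set μ : Ordinal.{u} := (Order.succ κ).ord with hμdef
  have hμcard : μ.card = Order.succ κ := Cardinal.card_ord _
  set Q : (ξ : μ.ToType) → (∀ η : μ.ToType, η < ξ → o.ToType) → o.ToType → Prop :=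
    fun ξ prev γ => (∀ η (h : η < ξ), prev η h ≤ γ) ∧
      closure (Set.range fun s : {η : μ.ToType // η < ξ} => x (prev s.1 s.2)) ∩
        closure (T γ) = ∅ with hQdef
  have hex : ∀ (ξ : μ.ToType) (prev : ∀ η : μ.ToType, η < ξ → o.ToType),
      ∃ γ, Q ξ prev γ := by
    intro ξ prev
    set D : Set X := Set.range fun s : {η : μ.ToType // η < ξ} => x (prev s.1 s.2) with hD
    have hcard' : #{η : μ.ToType // η < ξ} ≤ κ := by
      haveI : IsWellOrder μ.ToType (· < ·) := isWellOrder_lt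
      rw [← Ordinal.card_typein (r := ((· < ·) : μ.ToType → μ.ToType → Prop)) ξ]
      exact Order.lt_succ_iff.1 (Cardinal.lt_ord.1 (Ordinal.typein_lt_self ξ))
    have hDsub : D ⊆ A' := by rintro _ ⟨s, rfl⟩; exact hxA' _
    have hDcard : #D ≤ κ := Cardinal.mk_range_le.trans hcard'
    obtain ⟨γ₀, hγ₀⟩ := lemA (closure D) isClosed_closure (hqB D hDsub hDcard)
    obtain ⟨γ₁, hγ₁⟩ := exists_ub_of_card_lt_cof
      (Set.range fun s : {η : μ.ToType // η < ξ} => prev s.1 s.2)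
      ((Cardinal.mk_range_le.trans hcard').trans_lt hcof)
    refine ⟨max γ₀ γ₁, fun η h => (hγ₁ _ ⟨⟨η, h⟩, rfl⟩).trans (le_max_right _ _), ?_⟩
    rw [← Set.subset_empty_iff, ← hγ₀]
    exact Set.inter_subset_inter_right _ (closure_mono (hTanti (le_max_left _ _)))
  set G : μ.ToType → o.ToType :=
    (wellFounded_lt (α := μ.ToType)).fix (C := fun _ => o.ToType)
      (fun ξ prev => (hex ξ prev).choose) with hG
  have hGQ : ∀ ξ, Q ξ (fun η _ => G η) (G ξ) := by
    intro ξ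
    have heq := (wellFounded_lt (α := μ.ToType)).fix_eq (C := fun _ => o.ToType)
      (fun ξ prev => (hex ξ prev).choose) ξ
    rw [hG]
    rw [heq]
    exact (hex ξ _).choose_spec
  have hGmono : ∀ {a b : μ.ToType}, a ≤ b → G a ≤ G b := by
    intro a b h
    rcases h.lt_or_eq with h | h
    · exact (hGQ b).1 a h
    · exact h ▸ le_rfl
  set y : μ.ToType → X := fun i => x (G i) with hy
  have hfree : IsFreeSeq y := by
    intro i
    apply Set.subset_empty_iff.1
    have h1 : y '' {j | j < i} ⊆
        Set.range fun s : {η : μ.ToType // η < i} => x (G s.1) := by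
      rintro _ ⟨j, hj, rfl⟩
      exact ⟨⟨j, hj⟩, rfl⟩
    have h2 : y '' {j | i ≤ j} ⊆ T (G i) := by
      rintro _ ⟨j, hj, rfl⟩
      exact ⟨G j, hGmono hj, rfl⟩
    calc closure (y '' {j | j < i}) ∩ closure (y '' {j | i ≤ j})
        ⊆ closure (Set.range fun s : {η : μ.ToType // η < i} => x (G s.1)) ∩
            closure (T (G i)) :=
          Set.inter_subset_inter (closure_mono h1) (closure_mono h2)
      _ = ∅ := (hGQ i).2
  have hcontr := hF μ y hfree
  rw [hμcard] at hcontr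
  exact (Order.lt_succ κ).not_ge hcontr

/-- for a Lindelöf Hausdorff pseudoradial space, `t(X) = F(X)`. -/
theorem tightness_eq_freeSup {X : Type u} [TopologicalSpace X] [T2Space X] [LindelofSpace X]
    (hX : IsPseudoradial X) :
    tightnessCard X = freeSup X := by
  classical
  have hTne : {κ : Cardinal.{u} | ℵ₀ ≤ κ ∧ ∀ (A : Set X) (p : X), p ∈ closure A →
      ∃ B ⊆ A, #B ≤ κ ∧ p ∈ closure B}.Nonempty := by
    refine ⟨ℵ₀ ⊔ #X, le_sup_left, fun A p hp => ⟨A, subset_rfl, ?_, hp⟩⟩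
    exact le_sup_of_le_right (Cardinal.mk_set_le A)
  have hmem : tightnessCard X ∈ {κ : Cardinal.{u} | ℵ₀ ≤ κ ∧
      ∀ (A : Set X) (p : X), p ∈ closure A → ∃ B ⊆ A, #B ≤ κ ∧ p ∈ closure B} :=
    csInf_mem hTne
  obtain ⟨ht0, htp⟩ := hmem
  have heasy : ∀ (o : Ordinal.{u}) (x : o.ToType → X), IsFreeSeq x →
      o.card ≤ tightnessCard X := fun o x hx => free_card_le ht0 htp o x hx
  have hzero : (0 : Cardinal.{u}) ∈ {c : Cardinal.{u} |
      ∃ (o : Ordinal.{u}) (x : o.ToType → X), IsFreeSeq x ∧ c = o.card} :=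
    ⟨0, fun i => isEmptyElim i, fun i => isEmptyElim i, Ordinal.card_zero.symm⟩
  have h1 : freeSup X ≤ tightnessCard X := by
    refine sup_le ht0 (csSup_le ⟨0, hzero⟩ ?_)
    rintro c ⟨o, x, hx, rfl⟩
    exact heasy o x hx
  have hbdd : BddAbove {c : Cardinal.{u} |
      ∃ (o : Ordinal.{u}) (x : o.ToType → X), IsFreeSeq x ∧ c = o.card} := by
    refine ⟨tightnessCard X, ?_⟩
    rintro c ⟨o, x, hx, rfl⟩
    exact heasy o x hx
  have hω : ℵ₀ ≤ freeSup X := le_sup_left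
  have hFle : ∀ (o : Ordinal.{u}) (x : o.ToType → X), IsFreeSeq x →
      o.card ≤ freeSup X := by
    intro o x hx
    exact le_sup_of_le_right (le_csSup hbdd ⟨o, x, hx, rfl⟩)
  have h2 : tightnessCard X ≤ freeSup X :=
    csInf_le' ⟨hω, hard_tightness hX hω hFle⟩
  exact le_antisymm h2 h1
end

section
/- For every Lindelöf topological space X (no separation axioms needed), F(X) ≤ t(X): every free sequence in a Lindelöf space has cardinality at most the tightness of X. -/
open Cardinal Set TopologicalSpace

universe u

/-! A free sequence in a Lindelöf space cannot have cofinality above the tightness: Lindelöfness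
puts a point `p` in the closure of every final segment, tightness puts `p` in the closure of
`≤ t(X)` terms, which then lie in a proper initial segment, contradicting freeness there.
Restricting a long free sequence to its initial segment of regular length `t(X)⁺` gives
`F(X) ≤ t(X)`. -/

theorem tightnessCard_spec (X : Type u) [TopologicalSpace X] :
    ℵ₀ ≤ tightnessCard X ∧ ∀ (A : Set X) (p : X), p ∈ closure A →
      ∃ B ⊆ A, #B ≤ tightnessCard X ∧ p ∈ closure B :=
  csInf_mem (s := {κ : Cardinal.{u} | ℵ₀ ≤ κ ∧
      ∀ (A : Set X) (p : X), p ∈ closure A → ∃ B ⊆ A, #B ≤ κ ∧ p ∈ closure B})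
    ⟨max ℵ₀ #X, le_max_left _ _, fun A _ hp =>
      ⟨A, Subset.rfl, (mk_set_le A).trans (le_max_right _ _), hp⟩⟩

theorem LindelofSpace.iInter_nonempty_of_antitone {X : Type*} [TopologicalSpace X]
    [LindelofSpace X] {ι : Type*} [LinearOrder ι] {F : ι → Set X} (hF : Antitone F)
    (hclosed : ∀ i, IsClosed (F i)) (hne : ∀ i, (F i).Nonempty) (hcof : ℵ₀ < Order.cof ι) :
    (⋂ i, F i).Nonempty := by
  by_contra! hempty
  obtain ⟨S, hS, hSempty⟩ := isLindelof_univ.elim_countable_subfamily_closed F hclosed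
    (by rw [univ_inter, hempty])
  obtain ⟨b, hb⟩ := not_isCofinal_iff.1 fun hS' =>
    ((Order.cof_le hS').trans (mk_le_aleph0_iff.2 hS.to_subtype)).not_gt hcof
  obtain ⟨y, hy⟩ := hne b
  have hyS : y ∈ Set.univ ∩ ⋂ i ∈ S, F i :=
    ⟨trivial, mem_iInter₂.2 fun i hi => hF (hb i hi).le hy⟩
  rwa [hSempty] at hyS

theorem IsFreeSeq.comp_strictMono {X : Type u} [TopologicalSpace X] {ι ι' : Type u}
    [LinearOrder ι] [LinearOrder ι'] {x : ι → X} (hx : IsFreeSeq x) {f : ι' → ι}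
    (hf : StrictMono f) : IsFreeSeq (x ∘ f) := by
  intro i
  refine subset_empty_iff.1 ((inter_subset_inter (closure_mono ?_) (closure_mono ?_)).trans
    (hx (f i)).subset)
  · rintro _ ⟨j, hj, rfl⟩
    exact ⟨f j, hf hj, rfl⟩
  · rintro _ ⟨j, hj, rfl⟩
    exact ⟨f j, hf.monotone hj, rfl⟩

theorem IsFreeSeq.cof_le_tightnessCard {X : Type u} [TopologicalSpace X] [LindelofSpace X]
    {ι : Type u} [LinearOrder ι] {x : ι → X} (hx : IsFreeSeq x) :
    Order.cof ι ≤ tightnessCard X := by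
  obtain ⟨hκ, htight⟩ := tightnessCard_spec X
  by_contra! hlt
  have bounded (S : Set ι) (hS : #S ≤ tightnessCard X) : ∃ b, ∀ a ∈ S, a < b :=
    not_isCofinal_iff.1 fun hS' => ((Order.cof_le hS').trans hS).not_gt hlt
  obtain ⟨p, hp⟩ :=
    LindelofSpace.iInter_nonempty_of_antitone (F := fun i => closure (x '' Ici i))
    (fun i j hij => closure_mono (image_mono (Ici_subset_Ici.2 hij)))
    (fun _ => isClosed_closure) (fun i => ⟨x i, subset_closure ⟨i, le_rfl, rfl⟩⟩)
    (hκ.trans_lt hlt)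
  rw [mem_iInter] at hp
  obtain ⟨i₀, -⟩ := bounded ∅ (by simp)
  obtain ⟨B, hBx, hBκ, hpB⟩ := htight (range x) p
    (closure_mono (image_subset_range _ _) (hp i₀))
  obtain ⟨S, rfl, hinj⟩ := exists_image_eq_injOn_of_subset_range hBx
  obtain ⟨b, hb⟩ := bounded S ((mk_image_eq_of_injOn x S hinj).symm.trans_le hBκ)
  have hpb : p ∈ closure (x '' Iio b) := closure_mono (image_mono hb) hpB
  exact (hx b).subset ⟨hpb, hp b⟩

/-- in a Lindelöf space, `F(X) ≤ t(X)`. -/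
theorem freeSup_le_tightness {X : Type u} [TopologicalSpace X] [LindelofSpace X] :
    freeSup X ≤ tightnessCard X := by
  obtain ⟨hκ, -⟩ := tightnessCard_spec X
  refine sup_le hκ (csSup_le' ?_)
  rintro _ ⟨o, x, hx, rfl⟩
  by_contra! hlt
  obtain ⟨f⟩ : Nonempty ((Order.succ (tightnessCard X)).ord.ToType ≤i o.ToType) := by
    rw [← Ordinal.type_le_iff, Ordinal.type_toType, Ordinal.type_toType]
    exact Cardinal.ord_le.2 (Order.succ_le_of_lt hlt)
  have hcof := (hx.comp_strictMono f.strictMono).cof_le_tightnessCard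
  rw [Ordinal.cof_toType, (isRegular_succ hκ).cof_ord] at hcof
  exact (Order.lt_succ _).not_ge hcof
end

section
/- For every topological space X, F(X) ≤ L(X) · t(X): every free sequence in X has cardinality at most the product of the Lindelöf degree and the tightness of X. -/
open Cardinal Set TopologicalSpace

universe u

lemma bounded_of_card_le' {κ : Cardinal.{u}} (hκ : ℵ₀ ≤ κ)
    (S : Set ((Order.succ κ).ord.ToType)) (hS : #S ≤ κ) :
    ∃ b, ∀ s ∈ S, s < b := by
  haveI : IsWellOrder ((Order.succ κ).ord.ToType) (· < ·) := isWellOrder_lt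
  by_contra h
  push_neg at h
  have hub : IsCofinal S := fun a => h a
  have h1 := Order.cof_le hub
  rw [Ordinal.cof_toType] at h1
  rw [(Cardinal.isRegular_succ hκ).cof_eq] at h1
  exact absurd (h1.trans hS) (not_le.mpr (Order.lt_succ κ))

lemma IsFreeSeq'.comp {X : Type u} [TopologicalSpace X] {ι ι' : Type u} [LinearOrder ι] [LinearOrder ι']
    {x : ι → X} (hx : ∀ i : ι, closure (x '' {j | j < i}) ∩ closure (x '' {j | i ≤ j}) = ∅)
    (f : ι' ↪o ι) :
    ∀ i : ι', closure ((x ∘ f) '' {j | j < i}) ∩ closure ((x ∘ f) '' {j | i ≤ j}) = ∅ := by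
  intro i
  rw [eq_empty_iff_forall_notMem]
  rintro p ⟨h1, h2⟩
  have h1' : p ∈ closure (x '' {j | j < f i}) :=
    closure_mono (by rintro _ ⟨j, hj, rfl⟩; exact ⟨f j, f.lt_iff_lt.mpr hj, rfl⟩) h1
  have h2' : p ∈ closure (x '' {j | f i ≤ j}) :=
    closure_mono (by rintro _ ⟨j, hj, rfl⟩; exact ⟨f j, f.le_iff_le.mpr hj, rfl⟩) h2
  have h3 := hx (f i)
  rw [eq_empty_iff_forall_notMem] at h3
  exact h3 p ⟨h1', h2'⟩

lemma key_no_free {X : Type u} [TopologicalSpace X] {κ : Cardinal.{u}} (hκ : ℵ₀ ≤ κ)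
    (hcov : ∀ U : Set (Set X), (∀ u ∈ U, IsOpen u) → ⋃₀ U = Set.univ →
      ∃ V ⊆ U, #V ≤ κ ∧ ⋃₀ V = Set.univ)
    (ht : ∀ (A : Set X) (p : X), p ∈ closure A → ∃ B ⊆ A, #B ≤ κ ∧ p ∈ closure B)
    (y : (Order.succ κ).ord.ToType → X)
    (hfree : ∀ i, closure (y '' {j | j < i}) ∩ closure (y '' {j | i ≤ j}) = ∅) : False := by
  have hne : Nonempty (Order.succ κ).ord.ToType := by
    rw [← Cardinal.mk_ne_zero_iff, mk_ord_toType]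
    exact ne_of_gt (lt_of_le_of_lt (zero_le : (0 : Cardinal) ≤ κ) (Order.lt_succ κ))
  set C : (Order.succ κ).ord.ToType → Set X := fun i => closure (y '' {j | i ≤ j}) with hC
  have hCanti : ∀ {i i' : (Order.succ κ).ord.ToType}, i ≤ i' → C i' ⊆ C i := fun h =>
    closure_mono (image_mono fun j hj => le_trans h hj)
  have hmemC : ∀ i, y i ∈ C i := fun i => subset_closure ⟨i, le_refl i, rfl⟩
  have hInt : ⋂ i, C i = ∅ := by
    rw [eq_empty_iff_forall_notMem]
    intro p hp
    simp only [mem_iInter] at hp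
    obtain ⟨i₀⟩ := hne
    have hpcl : p ∈ closure (range y) :=
      closure_mono (by rintro _ ⟨j, _, rfl⟩; exact ⟨j, rfl⟩) (hp i₀)
    obtain ⟨B, hBsub, hBcard, hpB⟩ := ht (range y) p hpcl
    have hch : ∀ b : B, ∃ j, y j = b := fun b => hBsub b.2
    choose f hf using hch
    obtain ⟨β, hβ⟩ := bounded_of_card_le' hκ (range f) (mk_range_le.trans hBcard)
    have hBsub' : B ⊆ y '' {j | j < β} := fun b hb =>
      ⟨f ⟨b, hb⟩, hβ _ ⟨⟨b, hb⟩, rfl⟩, hf ⟨b, hb⟩⟩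
    have hmem : p ∈ closure (y '' {j | j < β}) ∩ closure (y '' {j | β ≤ j}) :=
      ⟨closure_mono hBsub' hpB, hp β⟩
    rw [hfree β] at hmem
    exact hmem
  obtain ⟨V, hVsub, hVcard, hVcov⟩ := hcov (range fun i => (C i)ᶜ)
    (by rintro u ⟨i, rfl⟩; exact (isClosed_closure).isOpen_compl)
    (by rw [eq_univ_iff_forall]
        intro p
        have hp : p ∉ ⋂ i, C i := by rw [hInt]; exact notMem_empty p
        rw [mem_iInter] at hp; push_neg at hp
        obtain ⟨i, hi⟩ := hp
        exact ⟨(C i)ᶜ, ⟨i, rfl⟩, hi⟩)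
  have hch : ∀ v : V, ∃ i, (C i)ᶜ = v := fun v => hVsub v.2
  choose g hg using hch
  obtain ⟨β, hβ⟩ := bounded_of_card_le' hκ (range g) (mk_range_le.trans hVcard)
  have hmemU : y β ∈ ⋃₀ V := hVcov ▸ mem_univ _
  obtain ⟨v, hv, hyv⟩ := hmemU
  have hgv := hg ⟨v, hv⟩
  have hyC : y β ∈ C (g ⟨v, hv⟩) :=
    hCanti (le_of_lt (hβ _ ⟨⟨v, hv⟩, rfl⟩)) (hmemC β)
  have hyv' : y β ∈ (C (g ⟨v, hv⟩))ᶜ := by rw [hgv]; exact hyv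
  exact hyv' hyC

/-- in any topological space, `F(X) ≤ L(X) · t(X)`. -/
theorem freeSup_le_lindelof_mul_tightness {X : Type u} [TopologicalSpace X] :
    freeSup X ≤ LindelofDeg X * tightnessCard X := by
  have hL : LindelofDeg X ∈ {κ : Cardinal.{u} | ℵ₀ ≤ κ ∧ ∀ U : Set (Set X),
      (∀ u ∈ U, IsOpen u) → ⋃₀ U = Set.univ → ∃ V ⊆ U, #V ≤ κ ∧ ⋃₀ V = Set.univ} :=
    csInf_mem ⟨ℵ₀ ⊔ #(Set X), le_sup_left, fun U _ hUcov =>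
      ⟨U, subset_rfl, (mk_set_le U).trans le_sup_right, hUcov⟩⟩
  have ht : tightnessCard X ∈ {κ : Cardinal.{u} | ℵ₀ ≤ κ ∧ ∀ (A : Set X) (p : X),
      p ∈ closure A → ∃ B ⊆ A, #B ≤ κ ∧ p ∈ closure B} :=
    csInf_mem ⟨ℵ₀ ⊔ #X, le_sup_left, fun A p hp =>
      ⟨A, subset_rfl, (mk_set_le A).trans le_sup_right, hp⟩⟩
  obtain ⟨hLinf, hLcov⟩ := hL
  obtain ⟨htinf, htB⟩ := ht
  have hLκ : LindelofDeg X ≤ LindelofDeg X * tightnessCard X :=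
    Cardinal.le_mul_right (ne_of_gt (lt_of_lt_of_le aleph0_pos htinf))
  have htκ : tightnessCard X ≤ LindelofDeg X * tightnessCard X :=
    Cardinal.le_mul_left (ne_of_gt (lt_of_lt_of_le aleph0_pos hLinf))
  set κ := LindelofDeg X * tightnessCard X with hκdef
  have hκinf : ℵ₀ ≤ κ := hLinf.trans hLκ
  rw [freeSup]
  refine sup_le hκinf (csSup_le' ?_)
  rintro c ⟨o, x, hx, rfl⟩
  by_contra hlt
  push_neg at hlt
  have hle : (Order.succ κ).ord ≤ o :=
    le_trans (Cardinal.ord_le_ord.mpr (Order.succ_le_of_lt hlt)) (ord_card_le o)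
  haveI i1 : IsWellOrder (Order.succ κ).ord.ToType (· < ·) := isWellOrder_lt
  haveI i2 : IsWellOrder o.ToType (· < ·) := isWellOrder_lt
  rw [← Ordinal.type_toType o, ← Ordinal.type_toType (Order.succ κ).ord,
    Ordinal.type_le_iff'] at hle
  obtain ⟨e⟩ := hle
  exact key_no_free hκinf
    (fun U hU hUc => (hLcov U hU hUc).imp fun V hV => ⟨hV.1, hV.2.1.trans hLκ, hV.2.2⟩)
    (fun A p hp => (htB A p hp).imp fun B hB => ⟨hB.1, hB.2.1.trans htκ, hB.2.2⟩)
    (x ∘ (RelEmbedding.orderEmbeddingOfLTEmbedding e))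
    (IsFreeSeq'.comp hx _)
end

section
/- If X is a Hausdorff space, then the set-tightness of X is at most L(X) · F(X). -/
open Cardinal Set TopologicalSpace

universe u

/-- for a Hausdorff space, `t_s(X) ≤ L(X) · F(X)`. -/
theorem setTightness_le_mul {X : Type u} [TopologicalSpace X] [T2Space X] :
    setTightness X ≤ LindelofDeg X * freeSup X := by
  classical
  -- Lindelöf degree facts
  have hLmem : LindelofDeg X ∈ {κ : Cardinal.{u} | ℵ₀ ≤ κ ∧ ∀ U : Set (Set X),
      (∀ u ∈ U, IsOpen u) → ⋃₀ U = Set.univ → ∃ V ⊆ U, #V ≤ κ ∧ ⋃₀ V = Set.univ} := by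
    apply csInf_mem
    refine ⟨#X ⊔ ℵ₀, le_sup_right, ?_⟩
    intro U hUo hUc
    have hx : ∀ y : X, ∃ u, u ∈ U ∧ y ∈ u := by
      intro y
      have : y ∈ ⋃₀ U := by rw [hUc]; trivial
      simpa [Set.mem_sUnion] using this
    choose g hg1 hg2 using hx
    refine ⟨Set.range g, ?_, ?_, ?_⟩
    · rintro u ⟨y, rfl⟩; exact hg1 y
    · exact Cardinal.mk_range_le.trans le_sup_left
    · exact Set.eq_univ_of_forall fun y => ⟨g y, ⟨y, rfl⟩, hg2 y⟩
  obtain ⟨hLinf, hLcov⟩ := hLmem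
  set κ := LindelofDeg X * freeSup X with hκ
  have hFinf : ℵ₀ ≤ freeSup X := le_sup_left
  have hLκ : LindelofDeg X ≤ κ := by
    calc LindelofDeg X = LindelofDeg X * 1 := (mul_one _).symm
    _ ≤ κ := mul_le_mul' le_rfl (Cardinal.one_le_aleph0.trans hFinf)
  have hFκ : freeSup X ≤ κ := by
    calc freeSup X = 1 * freeSup X := (one_mul _).symm
    _ ≤ κ := mul_le_mul' (Cardinal.one_le_aleph0.trans hLinf) le_rfl
  have hκinf : ℵ₀ ≤ κ := hLinf.trans hLκ
  apply csInf_le (OrderBot.bddBelow _)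
  refine ⟨hκinf, ?_⟩
  intro A p hp
  obtain ⟨hpA, hpnA⟩ := hp
  by_contra hcon
  push_neg at hcon
  -- the "ideal" property: unions of ≤ κ many small sets are small
  have hid : ∀ (σ : Type u) (B : σ → Set X), #σ ≤ κ → (∀ i, B i ⊆ A) →
      (∀ i, p ∉ closure (B i)) → p ∉ closure (⋃ i, B i) := by
    intro σ B h1 h2 h3 hcl
    obtain ⟨i, hi⟩ := hcon σ B h1 h2 hcl
    exact h3 i hi
  have hsub2 : ∀ B1 B2 : Set X, B1 ⊆ A → B2 ⊆ A → p ∉ closure B1 → p ∉ closure B2 →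
      p ∉ closure (B1 ∪ B2) := by
    intro B1 B2 s1 s2 n1 n2
    have hu : B1 ∪ B2 = ⋃ b : ULift.{u} Bool, (if b.down then B1 else B2) := by
      ext y
      simp only [Set.mem_iUnion, Set.mem_union]
      constructor
      · rintro (h | h)
        · exact ⟨⟨true⟩, by simpa using h⟩
        · exact ⟨⟨false⟩, by simpa using h⟩
      · rintro ⟨⟨b⟩, hb⟩
        cases b
        · exact Or.inr (by simpa using hb)
        · exact Or.inl (by simpa using hb)
    rw [hu]
    apply hid
    · exact Cardinal.mk_le_aleph0.trans hκinf
    · rintro ⟨b⟩; cases b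
      · simpa using s2
      · simpa using s1
    · rintro ⟨b⟩; cases b
      · simpa using n2
      · simpa using n1
  have hsing : ∀ y, y ∈ A → p ∉ closure ({y} : Set X) := by
    intro y hy
    rw [closure_singleton]
    intro h
    rw [Set.mem_singleton_iff] at h
    exact hpnA (h ▸ hy)
  -- the key shrinking lemma
  have hstar : ∀ B : Set X, B ⊆ A → ∀ Fc : Set X, IsClosed Fc → p ∉ Fc →
      ∃ G, G ⊆ B ∧ closure G ∩ Fc = ∅ ∧ p ∉ closure (B \ G) := by
    intro B hBA Fc hFcl hpF
    have hUo : ∀ u ∈ ({Fcᶜ} ∪ {u | IsOpen u ∧ p ∉ closure u} : Set (Set X)), IsOpen u := by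
      intro u hu
      rcases hu with hu | hu
      · rw [Set.mem_singleton_iff] at hu; subst hu; exact hFcl.isOpen_compl
      · exact hu.1
    have hUc : ⋃₀ ({Fcᶜ} ∪ {u | IsOpen u ∧ p ∉ closure u} : Set (Set X)) = Set.univ := by
      apply Set.eq_univ_of_forall
      intro y
      by_cases hy : y ∈ Fc
      · have hyp : y ≠ p := fun h => hpF (h ▸ hy)
        obtain ⟨u, v, hu, hv, hyu, hpv, huv⟩ := t2_separation hyp
        refine ⟨u, Or.inr ⟨hu, ?_⟩, hyu⟩
        intro hc
        exact Set.disjoint_left.mp (huv.closure_left hv) hc hpv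
      · exact ⟨Fcᶜ, Or.inl rfl, hy⟩
    obtain ⟨V, hVU, hVcard, hVc⟩ := hLcov _ hUo hUc
    have hWo : IsOpen (⋃₀ {u | u ∈ V ∧ p ∉ closure u}) := by
      apply isOpen_sUnion
      rintro u ⟨huV, -⟩
      exact hUo u (hVU huV)
    have hFW : Fc ⊆ ⋃₀ {u | u ∈ V ∧ p ∉ closure u} := by
      intro y hy
      have : y ∈ ⋃₀ V := by rw [hVc]; trivial
      obtain ⟨v, hvV, hyv⟩ := this
      rcases hVU hvV with hv | hv
      · rw [Set.mem_singleton_iff] at hv; subst hv; exact absurd hy hyv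
      · exact ⟨v, ⟨hvV, hv.2⟩, hyv⟩
    refine ⟨B \ ⋃₀ {u | u ∈ V ∧ p ∉ closure u}, Set.diff_subset, ?_, ?_⟩
    · have hd : Disjoint (B \ ⋃₀ {u | u ∈ V ∧ p ∉ closure u})
          (⋃₀ {u | u ∈ V ∧ p ∉ closure u}) := disjoint_sdiff_left
      exact Set.disjoint_iff_inter_eq_empty.mp ((hd.closure_left hWo).mono_right hFW)
    · have hdiff : B \ (B \ ⋃₀ {u | u ∈ V ∧ p ∉ closure u})
          = ⋃ v : {u // u ∈ V ∧ p ∉ closure u}, B ∩ (v : Set X) := by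
        ext y
        constructor
        · rintro ⟨hyB, hyn⟩
          have hyW : y ∈ ⋃₀ {u | u ∈ V ∧ p ∉ closure u} := by
            by_contra hc
            exact hyn ⟨hyB, hc⟩
          obtain ⟨v, hv, hyv⟩ := hyW
          exact Set.mem_iUnion.2 ⟨⟨v, hv⟩, hyB, hyv⟩
        · intro hy
          obtain ⟨v, hyB, hyv⟩ := Set.mem_iUnion.1 hy
          exact ⟨hyB, fun hc => hc.2 ⟨v.1, v.2, hyv⟩⟩
      rw [hdiff]
      apply hid
      · refine le_trans ?_ (hVcard.trans hLκ)
        exact Cardinal.mk_le_mk_of_subset fun u hu => hu.1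
      · intro v; exact Set.inter_subset_left.trans hBA
      · intro v
        intro hc
        exact v.2.2 (closure_mono Set.inter_subset_right hc)
  -- the transfinite construction of a long free sequence
  have hwf : WellFounded ((· < ·) : (Order.succ κ).ord.ToType → (Order.succ κ).ord.ToType → Prop) :=
    IsWellFounded.wf
  set ι := (Order.succ κ).ord.ToType with hιdef
  haveI : IsWellOrder ι (· < ·) :=
    isWellOrder_lt
  have hcard : ∀ i : ι, #{j : ι // j < i} ≤ κ := by
    intro i
    have h2 := Cardinal.card_typein_toType_lt (Order.succ κ) i
    have h1 : #{j : ι // j < i} = (Ordinal.typein (α := ι) (· < ·) i).card :=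
      (Ordinal.card_typein i).symm
    rw [h1]
    exact Order.lt_succ_iff.mp h2
  let step : ∀ i : ι, (∀ j : ι, j < i → X × Set X) → X × Set X := fun i prior =>
    if h : ∃ z : X × Set X, z.1 ∈ z.2 ∧
        z.2 ⊆ (A ∩ ⋂ j, ⋂ (hj : j < i), (prior j hj).2) ∧
        closure z.2 ∩ closure (⋃ j, ⋃ (hj : j < i), {(prior j hj).1}) = ∅ ∧
        p ∉ closure ((A ∩ ⋂ j, ⋂ (hj : j < i), (prior j hj).2) \ z.2)
      then h.choose else (p, ∅)
  let f : ι → X × Set X := fun i => hwf.fix step i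
  have hfe : ∀ i : ι, f i =
      if h : ∃ z : X × Set X, z.1 ∈ z.2 ∧
        z.2 ⊆ (A ∩ ⋂ j, ⋂ (_ : j < i), (f j).2) ∧
        closure z.2 ∩ closure (⋃ j, ⋃ (_ : j < i), {(f j).1}) = ∅ ∧
        p ∉ closure ((A ∩ ⋂ j, ⋂ (_ : j < i), (f j).2) \ z.2)
      then h.choose else (p, ∅) := fun i => hwf.fix_eq step i
  have key : ∀ i : ι, p ∉ closure (A \ (A ∩ ⋂ j, ⋂ (_ : j < i), (f j).2)) ∧
      (f i).1 ∈ (f i).2 ∧ (f i).2 ⊆ (A ∩ ⋂ j, ⋂ (_ : j < i), (f j).2) ∧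
      closure (f i).2 ∩ closure (⋃ j, ⋃ (_ : j < i), {(f j).1}) = ∅ ∧
      p ∉ closure ((A ∩ ⋂ j, ⋂ (_ : j < i), (f j).2) \ (f i).2) := by
    intro i
    induction i using WellFounded.induction hwf with
    | _ i IH =>
    have hCA : ∀ j : ι, (A ∩ ⋂ k, ⋂ (_ : k < j), (f k).2) ⊆ A := fun j => Set.inter_subset_left
    have hACi : A \ (A ∩ ⋂ j, ⋂ (_ : j < i), (f j).2)
        = ⋃ q : {j : ι // j < i}, (A \ (f q.1).2) := by
      ext y
      simp only [Set.mem_diff, Set.mem_inter_iff, Set.mem_iInter, Set.mem_iUnion, not_and,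
        not_forall, Subtype.exists]
      constructor
      · rintro ⟨hyA, h2⟩
        obtain ⟨j, hj, hyj⟩ := h2 hyA
        exact ⟨j, hj, hyA, hyj⟩
      · rintro ⟨j, hj, hyA, hyj⟩
        exact ⟨hyA, fun _ => ⟨j, hj, hyj⟩⟩
    have h0 : p ∉ closure (A \ (A ∩ ⋂ j, ⋂ (_ : j < i), (f j).2)) := by
      rw [hACi]
      apply hid
      · exact hcard i
      · intro q; exact Set.diff_subset
      · intro q
        obtain ⟨hq0, hq1, hq2, hq3, hq4⟩ := IH q.1 q.2
        have hsubs : A \ (f q.1).2 ⊆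
            (A \ (A ∩ ⋂ k, ⋂ (_ : k < q.1), (f k).2)) ∪
            ((A ∩ ⋂ k, ⋂ (_ : k < q.1), (f k).2) \ (f q.1).2) := by
          rintro y ⟨hyA, hyB⟩
          by_cases hyC : y ∈ A ∩ ⋂ k, ⋂ (_ : k < q.1), (f k).2
          · exact Or.inr ⟨hyC, hyB⟩
          · exact Or.inl ⟨hyA, hyC⟩
        intro hc
        exact hsub2 _ _ Set.diff_subset (Set.diff_subset.trans (hCA q.1)) hq0 hq4
          (closure_mono hsubs hc)
    have h2 : p ∈ closure (A ∩ ⋂ j, ⋂ (_ : j < i), (f j).2) := by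
      have hsp : A ⊆ (A ∩ ⋂ j, ⋂ (_ : j < i), (f j).2) ∪
          (A \ (A ∩ ⋂ j, ⋂ (_ : j < i), (f j).2)) := by
        intro y hy
        by_cases hyC : y ∈ A ∩ ⋂ j, ⋂ (_ : j < i), (f j).2
        · exact Or.inl hyC
        · exact Or.inr ⟨hy, hyC⟩
      have h := closure_mono hsp hpA
      rw [closure_union] at h
      rcases h with h | h
      · exact h
      · exact absurd h h0
    have h3 : p ∉ closure (⋃ j, ⋃ (_ : j < i), ({(f j).1} : Set X)) := by
      have hPeq : (⋃ j, ⋃ (_ : j < i), ({(f j).1} : Set X))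
          = ⋃ q : {j : ι // j < i}, ({(f q.1).1} : Set X) := by
        ext y
        simp only [Set.mem_iUnion, Subtype.exists]
        exact Iff.rfl
      rw [hPeq]
      apply hid
      · exact hcard i
      · intro q
        obtain ⟨hq0, hq1, hq2, hq3, hq4⟩ := IH q.1 q.2
        rw [Set.singleton_subset_iff]
        exact (hq2 hq1).1
      · intro q
        obtain ⟨hq0, hq1, hq2, hq3, hq4⟩ := IH q.1 q.2
        exact hsing _ (hq2 hq1).1
    obtain ⟨G, hG1, hG2, hG3⟩ := hstar (A ∩ ⋂ j, ⋂ (_ : j < i), (f j).2) (hCA i)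
      (closure (⋃ j, ⋃ (_ : j < i), ({(f j).1} : Set X))) isClosed_closure h3
    have hpG : p ∈ closure G := by
      have hsp : (A ∩ ⋂ j, ⋂ (_ : j < i), (f j).2) ⊆
          G ∪ ((A ∩ ⋂ j, ⋂ (_ : j < i), (f j).2) \ G) := by
        intro y hy
        by_cases hyG : y ∈ G
        · exact Or.inl hyG
        · exact Or.inr ⟨hy, hyG⟩
      have h := closure_mono hsp h2
      rw [closure_union] at h
      rcases h with h | h
      · exact h
      · exact absurd h hG3
    have hGne : G.Nonempty := by
      rcases G.eq_empty_or_nonempty with rfl | h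
      · rw [closure_empty] at hpG; exact absurd hpG (Set.notMem_empty p)
      · exact h
    obtain ⟨q0, hq0⟩ := hGne
    have hcond : ∃ z : X × Set X, z.1 ∈ z.2 ∧
        z.2 ⊆ (A ∩ ⋂ j, ⋂ (_ : j < i), (f j).2) ∧
        closure z.2 ∩ closure (⋃ j, ⋃ (_ : j < i), {(f j).1}) = ∅ ∧
        p ∉ closure ((A ∩ ⋂ j, ⋂ (_ : j < i), (f j).2) \ z.2) :=
      ⟨(q0, G), hq0, hG1, hG2, hG3⟩
    have hfi : f i = hcond.choose := by
      rw [hfe i, dif_pos hcond]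
    obtain ⟨hz1, hz2, hz3, hz4⟩ := hcond.choose_spec
    rw [hfi]
    exact ⟨h0, hz1, hz2, hz3, hz4⟩
  -- the resulting sequence is free
  have hfree : IsFreeSeq (fun i : ι => (f i).1) := by
    intro i
    have hinit : (fun i : ι => (f i).1) '' {j | j < i}
        ⊆ ⋃ j, ⋃ (_ : j < i), ({(f j).1} : Set X) := by
      rintro y ⟨j, hj, rfl⟩
      exact Set.mem_iUnion.2 ⟨j, Set.mem_iUnion.2 ⟨hj, rfl⟩⟩
    have hfin : (fun i : ι => (f i).1) '' {j | i ≤ j} ⊆ (f i).2 := by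
      rintro y ⟨j, hj, rfl⟩
      rcases eq_or_lt_of_le (show i ≤ j from hj) with rfl | hij
      · exact (key i).2.1
      · have h1 := (key j).2.1
        have h2 := (key j).2.2.1 h1
        exact Set.mem_iInter.mp (Set.mem_iInter.mp h2.2 i) hij
    have hkey := (key i).2.2.2.1
    apply Set.eq_empty_of_subset_empty
    calc closure ((fun i : ι => (f i).1) '' {j | j < i})
          ∩ closure ((fun i : ι => (f i).1) '' {j | i ≤ j})
        ⊆ closure (⋃ j, ⋃ (_ : j < i), ({(f j).1} : Set X)) ∩ closure (f i).2 :=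
          Set.inter_subset_inter (closure_mono hinit) (closure_mono hfin)
      _ = closure (f i).2 ∩ closure (⋃ j, ⋃ (_ : j < i), ({(f j).1} : Set X)) :=
          Set.inter_comm _ _
      _ = ∅ := hkey
  -- conclude: a free sequence of length κ⁺, contradiction
  have hmemS : Order.succ κ ∈ {c : Cardinal.{u} |
      ∃ (o' : Ordinal.{u}) (y : o'.ToType → X), IsFreeSeq y ∧ c = o'.card} :=
    ⟨(Order.succ κ).ord, fun i : ι => (f i).1, hfree, (Cardinal.card_ord _).symm⟩
  have hbddS : BddAbove {c : Cardinal.{u} |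
      ∃ (o' : Ordinal.{u}) (y : o'.ToType → X), IsFreeSeq y ∧ c = o'.card} := by
    refine ⟨#X ⊔ 1, ?_⟩
    rintro c ⟨o', y, hy, rfl⟩
    rcases isEmpty_or_nonempty o'.ToType with hE | hN
    · rw [← Cardinal.mk_toType, Cardinal.mk_eq_zero]
      exact zero_le
    · have hyinj : Function.Injective y := by
        intro a b hab
        by_contra hne
        rcases Ne.lt_or_gt hne with hlt | hlt
        · have h1 : y a ∈ closure (y '' {j | j < b}) := subset_closure ⟨a, hlt, rfl⟩
          have h2 : y b ∈ closure (y '' {j | b ≤ j}) := subset_closure ⟨b, le_refl b, rfl⟩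
          rw [hab] at h1
          have := Set.mem_inter h1 h2
          rw [hy b] at this
          exact Set.notMem_empty _ this
        · have h1 : y b ∈ closure (y '' {j | j < a}) := subset_closure ⟨b, hlt, rfl⟩
          have h2 : y a ∈ closure (y '' {j | a ≤ j}) := subset_closure ⟨a, le_refl a, rfl⟩
          rw [← hab] at h1
          have := Set.mem_inter h1 h2
          rw [hy a] at this
          exact Set.notMem_empty _ this
      refine le_trans ?_ le_sup_left
      rw [← Cardinal.mk_toType]
      exact Cardinal.mk_le_of_injective hyinj
  have hfinal : Order.succ κ ≤ freeSup X := le_trans (le_csSup hbddS hmemS) le_sup_right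
  have hle : Order.succ κ ≤ κ := hfinal.trans hFκ
  exact absurd hle (not_le.mpr (Order.lt_succ κ))
end

section
/- Let X be a Lindelöf Hausdorff almost radial space. Then the radial character σ_C(X) equals F(X), the supremum of cardinalities of free sequences in X. -/
open Cardinal Set TopologicalSpace

universe u

section AuxRadial

open Ordinal

variable {X : Type u} [TopologicalSpace X]

instance auxWO (o : Ordinal.{u}) : IsWellOrder o.ToType (· < ·) := isWellOrder_lt

lemma aux_nonempty {o : Ordinal.{u}} {x : o.ToType → X} {p : X} (hc : ConvergesTo x p) :
    Nonempty o.ToType := by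
  obtain ⟨b, -⟩ := hc Set.univ isOpen_univ (Set.mem_univ p)
  exact ⟨b⟩

lemma aux_mem_closure_tail {o : Ordinal.{u}} {x : o.ToType → X} {p : X}
    (hc : ConvergesTo x p) (b : o.ToType) : p ∈ closure (x '' {a | b ≤ a}) := by
  rw [mem_closure_iff]
  intro V hV hpV
  obtain ⟨c, hcV⟩ := hc V hV hpV
  rcases le_total b c with h | h
  · exact ⟨x c, hcV c le_rfl, ⟨c, h, rfl⟩⟩
  · exact ⟨x b, hcV b h, ⟨b, le_refl b, rfl⟩⟩

lemma aux_mem_closure_range {o : Ordinal.{u}} {x : o.ToType → X} {p : X}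
    (hc : ConvergesTo x p) : p ∈ closure (Set.range x) := by
  obtain ⟨b⟩ := aux_nonempty hc
  exact closure_mono (Set.image_subset_range x _) (aux_mem_closure_tail hc b)

lemma IsFreeSeq.aux_injective {ι : Type u} [LinearOrder ι] {x : ι → X} (h : IsFreeSeq x) :
    Function.Injective x := by
  intro a b hab
  rcases lt_trichotomy a b with hlt | heq | hlt
  · have hmem : x b ∈ closure (x '' {j | j < b}) ∩ closure (x '' {j | b ≤ j}) :=
      ⟨subset_closure ⟨a, hlt, hab⟩, subset_closure ⟨b, le_rfl, rfl⟩⟩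
    rw [h b] at hmem
    exact absurd hmem (Set.notMem_empty _)
  · exact heq
  · have hmem : x a ∈ closure (x '' {j | j < a}) ∩ closure (x '' {j | a ≤ j}) :=
      ⟨subset_closure ⟨b, hlt, hab.symm⟩, subset_closure ⟨a, le_rfl, rfl⟩⟩
    rw [h a] at hmem
    exact absurd hmem (Set.notMem_empty _)

lemma aux_strict_ub {o : Ordinal.{u}} (J : Set o.ToType) (hJ : #J < o.cof) :
    ∃ b : o.ToType, ∀ j ∈ J, j < b := by
  by_contra hne
  push_neg at hne
  have h' := Order.cof_le (α := o.ToType) (s := J) hne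
  rw [Ordinal.cof_toType] at h'
  exact absurd hJ (not_lt.2 h')

lemma aux_card_Iio_lt {c : Cardinal.{u}} (i : c.ord.ToType) :
    #{j : c.ord.ToType // j < i} < c := by
  rw [show #{j : c.ord.ToType // j < i} = (@Ordinal.typein c.ord.ToType (· < ·) (auxWO _) i).card
    from Ordinal.card_typein i]
  exact Cardinal.lt_ord.mp (Ordinal.typein_lt_self i)

lemma aux_key [T2Space X] [LindelofSpace X] {o : Ordinal.{u}} {x : o.ToType → X} {p : X}
    (hc : ConvergesTo x p) (hcof : ℵ₀ < o.cof) {D : Set X} (hD : IsClosed D) (hpD : p ∉ D) :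
    ∃ b : o.ToType, closure (x '' {a | b ≤ a}) ∩ D = ∅ := by
  have sep : ∀ d : D, ∃ (U : Set X) (b : o.ToType),
      IsOpen U ∧ (d : X) ∈ U ∧ ∀ a, b ≤ a → x a ∉ U := by
    rintro ⟨d, hd⟩
    have hne : d ≠ p := fun h => hpD (h ▸ hd)
    obtain ⟨U, V, hU, hV, hdU, hpV, hUV⟩ := t2_separation hne
    obtain ⟨b, hb⟩ := hc V hV hpV
    exact ⟨U, b, hU, hdU, fun a ha hmem => (Set.disjoint_left.mp hUV hmem) (hb a ha)⟩
  choose U b hUopen hdU hmiss using sep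
  have hDsub : D ⊆ ⋃ d : D, U d := fun q hq => Set.mem_iUnion.2 ⟨⟨q, hq⟩, hdU ⟨q, hq⟩⟩
  obtain ⟨t, htc, htsub⟩ := hD.isLindelof.elim_countable_subcover U hUopen hDsub
  have hJ : #(b '' t) < o.cof :=
    lt_of_le_of_lt (le_trans Cardinal.mk_image_le (Cardinal.mk_le_aleph0_iff.2 htc.to_subtype))
      hcof
  obtain ⟨β, hβ⟩ := aux_strict_ub (b '' t) hJ
  refine ⟨β, Set.eq_empty_iff_forall_notMem.2 ?_⟩
  rintro q ⟨hq1, hq2⟩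
  obtain ⟨d, hdt, hqU⟩ : ∃ d ∈ t, q ∈ U d := by simpa using htsub hq2
  obtain ⟨z, hzU, a, ha, hz⟩ := mem_closure_iff.1 hq1 (U d) (hUopen d) hqU
  have hba : b d < β := hβ _ ⟨d, hdt, rfl⟩
  exact hmiss d a (le_of_lt (lt_of_lt_of_le hba ha)) (hz ▸ hzU)

lemma aux_isLimit [T1Space X] {o : Ordinal.{u}} {x : o.ToType → X} {p : X} {A : Set X}
    (hxA : ∀ i, x i ∈ A) (hc : ConvergesTo x p) (hp : p ∉ A) : Order.IsSuccLimit o := by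
  rcases Ordinal.zero_or_succ_or_isSuccLimit o with h0 | ⟨a, ha⟩ | hl
  · exact absurd h0 (Ordinal.nonempty_toType_iff.1 (aux_nonempty hc))
  · exfalso
    have hao : a < o := ha ▸ Order.lt_succ a
    set m : o.ToType := (Ordinal.ToType.mk (o := o)) ⟨a, Set.mem_Iio.2 hao⟩ with hm
    have hmax : ∀ c : o.ToType, c ≤ m := by
      intro c
      have h1 : (((Ordinal.ToType.mk (o := o))).symm c).1 < o :=
        Set.mem_Iio.1 (((Ordinal.ToType.mk (o := o))).symm c).2
      have h2 : (((Ordinal.ToType.mk (o := o))).symm c).1 ≤ a :=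
        Order.lt_succ_iff.1 (lt_of_lt_of_eq h1 ha.symm)
      have h3 : ((Ordinal.ToType.mk (o := o))).symm c ≤ (⟨a, Set.mem_Iio.2 hao⟩ : Set.Iio o) :=
        Subtype.coe_le_coe.1 h2
      calc c = (Ordinal.ToType.mk (o := o)) (((Ordinal.ToType.mk (o := o))).symm c) :=
            (OrderIso.apply_symm_apply _ _).symm
        _ ≤ m := ((Ordinal.ToType.mk (o := o))).le_iff_le.2 h3
    have hpx : p ∈ closure {x m} := by
      rw [mem_closure_iff]
      intro V hV hpV
      obtain ⟨b, hb⟩ := hc V hV hpV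
      exact ⟨x m, hb m (hmax b), Set.mem_singleton _⟩
    rw [IsClosed.closure_eq isClosed_singleton] at hpx
    exact hp (by rw [Set.mem_singleton_iff.1 hpx]; exact hxA m)
  · exact hl

lemma aux_sub_conv {o μ : Ordinal.{u}} {e : μ.ToType → o.ToType} (hmono : Monotone e)
    (hcof : ∀ a, ∃ i, a ≤ e i) {x : o.ToType → X} {p : X} (hc : ConvergesTo x p) :
    ConvergesTo (fun i => x (e i)) p := by
  intro V hV hpV
  obtain ⟨b, hb⟩ := hc V hV hpV
  obtain ⟨i, hi⟩ := hcof b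
  exact ⟨i, fun j hj => hb (e j) (le_trans hi (hmono hj))⟩

lemma aux_sub_thin {o μ : Ordinal.{u}} {e : μ.ToType → o.ToType} (hmono : StrictMono e)
    {x : o.ToType → X} {p : X} (ht : IsThin x p) : IsThin (fun i => x (e i)) p := by
  intro i hpc
  refine ht (e i) (closure_mono ?_ hpc)
  rintro _ ⟨j, hj, rfl⟩
  exact ⟨e j, hmono hj, rfl⟩

lemma aux_sub_free {o μ : Ordinal.{u}} {e : μ.ToType → o.ToType} (hmono : StrictMono e)
    {x : o.ToType → X} (hx : IsFreeSeq x) : IsFreeSeq (fun i => x (e i)) := by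
  intro i
  apply Set.subset_empty_iff.mp
  intro q hq
  have h1 : (fun i => x (e i)) '' {j | j < i} ⊆ x '' {j | j < e i} := by
    rintro _ ⟨j, hj, rfl⟩
    exact ⟨e j, hmono hj, rfl⟩
  have h2 : (fun i => x (e i)) '' {j | i ≤ j} ⊆ x '' {j | e i ≤ j} := by
    rintro _ ⟨j, hj, rfl⟩
    exact ⟨e j, hmono.monotone hj, rfl⟩
  rw [← hx (e i)]
  exact ⟨closure_mono h1 hq.1, closure_mono h2 hq.2⟩

noncomputable def auxEmbed {μ o : Ordinal.{u}} (h : μ ≤ o) : μ.ToType → o.ToType :=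
  fun i => (Ordinal.ToType.mk (o := o)) ⟨(((Ordinal.ToType.mk (o := μ))).symm i).1,
    Set.mem_Iio.2 (lt_of_lt_of_le (Set.mem_Iio.1 (((Ordinal.ToType.mk (o := μ))).symm i).2) h)⟩

lemma auxEmbed_strictMono {μ o : Ordinal.{u}} (h : μ ≤ o) : StrictMono (auxEmbed h) := by
  intro i j hij
  have h1 : ((Ordinal.ToType.mk (o := μ))).symm i < ((Ordinal.ToType.mk (o := μ))).symm j :=
    ((Ordinal.ToType.mk (o := μ))).symm.lt_iff_lt.2 hij
  unfold auxEmbed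
  exact ((Ordinal.ToType.mk (o := o))).lt_iff_lt.2 (Subtype.mk_lt_mk.2 (Subtype.coe_lt_coe.2 h1))

lemma aux_restrict {o : Ordinal.{u}} {x : o.ToType → X} {p : X} {A : Set X}
    (hxA : ∀ i, x i ∈ A) (hc : ConvergesTo x p) (ht : IsThin x p) :
    ∃ x' : o.cof.ord.ToType → X, (∀ i, x' i ∈ A) ∧ ConvergesTo x' p ∧ IsThin x' p := by
  obtain ⟨f, hf⟩ := Ordinal.exists_fundamental_sequence o
  have hlt : ∀ i : o.cof.ord.ToType, f (((Ordinal.ToType.mk (o := o.cof.ord))).symm i).1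
      (Set.mem_Iio.1 (((Ordinal.ToType.mk (o := o.cof.ord))).symm i).2) < o := fun i => hf.lt _
  set e : o.cof.ord.ToType → o.ToType :=
    fun i => (Ordinal.ToType.mk (o := o)) ⟨_, Set.mem_Iio.2 (hlt i)⟩ with he
  have hemono : StrictMono e := by
    intro i j hij
    have h1 : ((Ordinal.ToType.mk (o := o.cof.ord))).symm i < ((Ordinal.ToType.mk (o := o.cof.ord))).symm j :=
      ((Ordinal.ToType.mk (o := o.cof.ord))).symm.lt_iff_lt.2 hij
    exact ((Ordinal.ToType.mk (o := o))).lt_iff_lt.2 (Subtype.mk_lt_mk.2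
      (hf.strict_mono _ _ (Subtype.coe_lt_coe.2 h1)))
  have hecof : ∀ a : o.ToType, ∃ i, a ≤ e i := by
    intro a
    have h2 : (((Ordinal.ToType.mk (o := o))).symm a).1 < Ordinal.blsub o.cof.ord f := by
      rw [hf.blsub_eq]
      exact Set.mem_Iio.1 (((Ordinal.ToType.mk (o := o))).symm a).2
    obtain ⟨c, hcμ, hcle⟩ := Ordinal.lt_blsub_iff.1 h2
    refine ⟨(Ordinal.ToType.mk (o := o.cof.ord)) ⟨c, Set.mem_Iio.2 hcμ⟩, ?_⟩
    have hs : ((Ordinal.ToType.mk (o := o.cof.ord))).symm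
          ((Ordinal.ToType.mk (o := o.cof.ord)) ⟨c, Set.mem_Iio.2 hcμ⟩)
        = ⟨c, Set.mem_Iio.2 hcμ⟩ := OrderIso.symm_apply_apply _ _
    have ha : a = (Ordinal.ToType.mk (o := o)) (((Ordinal.ToType.mk (o := o))).symm a) :=
      (OrderIso.apply_symm_apply _ _).symm
    rw [ha]
    show (Ordinal.ToType.mk (o := o)) _ ≤ e _
    apply ((Ordinal.ToType.mk (o := o))).le_iff_le.2
    apply Subtype.coe_le_coe.1
    show (((Ordinal.ToType.mk (o := o))).symm a).1 ≤ f _ _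
    rw [hs]
    exact hcle
  exact ⟨fun i => x (e i), fun i => hxA (e i), aux_sub_conv hemono.monotone hecof hc,
    aux_sub_thin hemono ht⟩

lemma aux_long_free [T2Space X] [LindelofSpace X] {κ : Cardinal.{u}} (hκ : ℵ₀ ≤ κ)
    {l : Ordinal.{u}} {x : l.ToType → X} {p : X}
    (hcof : κ < l.cof) (hc : ConvergesTo x p) (ht : IsThin x p) :
    ∃ y : (Order.succ κ).ord.ToType → X, IsFreeSeq y := by
  have step : ∀ (i : (Order.succ κ).ord.ToType)
      (g : {j : (Order.succ κ).ord.ToType // j < i} → l.ToType),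
      ∃ b : l.ToType, (∀ j, g j < b) ∧
        closure (x '' {a | b ≤ a}) ∩ closure (Set.range fun j => x (g j)) = ∅ := by
    intro i g
    have hcard : #(Set.range g) ≤ κ :=
      le_trans Cardinal.mk_range_le (Order.lt_succ_iff.1 (aux_card_Iio_lt i))
    obtain ⟨β, hβ⟩ := aux_strict_ub (Set.range g) (lt_of_le_of_lt hcard hcof)
    have hsub : (Set.range fun j => x (g j)) ⊆ x '' {a | a < β} := by
      rintro _ ⟨j, rfl⟩
      exact ⟨g j, hβ _ ⟨j, rfl⟩, rfl⟩
    have hpD : p ∉ closure (Set.range fun j => x (g j)) := fun hmem =>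
      ht β (closure_mono hsub hmem)
    obtain ⟨b₀, hb₀⟩ := aux_key hc (lt_of_le_of_lt hκ hcof) isClosed_closure hpD
    refine ⟨max b₀ β, fun j => lt_of_lt_of_le (hβ _ ⟨j, rfl⟩) (le_max_right _ _), ?_⟩
    apply Set.subset_empty_iff.mp
    rw [← hb₀]
    exact Set.inter_subset_inter
      (closure_mono (Set.image_mono fun a ha => le_trans (le_max_left b₀ β) ha))
      Set.Subset.rfl
  have wf : WellFounded ((· < ·) : (Order.succ κ).ord.ToType → (Order.succ κ).ord.ToType → Prop) :=
    wellFounded_lt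
  let F : ∀ i : (Order.succ κ).ord.ToType, (∀ j, j < i → l.ToType) → l.ToType :=
    fun i rec => Classical.choose (step i (fun j => rec j.1 j.2))
  set β := wf.fix F with hβdef
  have hβeq : ∀ i, β i = F i (fun j _ => β j) := fun i => wf.fix_eq F i
  have hβmono : StrictMono β := by
    intro i j hij
    have hspec := (Classical.choose_spec (step j (fun j' : {j' // j' < j} => β j'.1))).1 ⟨i, hij⟩
    rw [hβeq j]
    exact hspec
  have hβdisj : ∀ i, closure (x '' {a | β i ≤ a}) ∩
      closure (Set.range fun j : {j // j < i} => x (β j.1)) = ∅ := by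
    intro i
    have hspec := (Classical.choose_spec (step i (fun j : {j // j < i} => β j.1))).2
    rw [hβeq i]
    exact hspec
  refine ⟨fun i => x (β i), fun i => ?_⟩
  apply Set.subset_empty_iff.mp
  rw [← hβdisj i]
  have h1 : (fun i => x (β i)) '' {j | j < i} ⊆ Set.range fun j : {j // j < i} => x (β j.1) := by
    rintro _ ⟨j, hj, rfl⟩
    exact ⟨⟨j, hj⟩, rfl⟩
  have h2 : (fun i => x (β i)) '' {j | i ≤ j} ⊆ x '' {a | β i ≤ a} := by
    rintro _ ⟨j, hj, rfl⟩
    exact ⟨β j, hβmono.monotone hj, rfl⟩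
  intro q hq
  exact ⟨closure_mono h2 hq.2, closure_mono h1 hq.1⟩

lemma aux_mem_radialSet [T2Space X] [LindelofSpace X] (hX : IsAlmostRadial X) :
    freeSup X ∈ {κ : Cardinal.{u} | ℵ₀ ≤ κ ∧ ∀ A : Set X, ¬ IsClosed A →
      ∃ p ∈ closure A \ A, ∃ (o : Ordinal.{u}) (x : o.ToType → X),
        o.card ≤ κ ∧ (∀ i, x i ∈ A) ∧ ConvergesTo x p ∧ IsThin x p} := by
  constructor
  · exact le_sup_left
  intro A hA
  obtain ⟨p, hp, o, x, hxA, hc, ht⟩ := hX A hA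
  have ho : Order.IsSuccLimit o := aux_isLimit hxA hc hp.2
  obtain ⟨x', hx'A, hc', ht'⟩ := aux_restrict hxA hc ht
  by_cases hle : o.cof ≤ freeSup X
  · exact ⟨p, hp, o.cof.ord, x', by rw [Cardinal.card_ord]; exact hle, hx'A, hc', ht'⟩
  · exfalso
    push_neg at hle
    have hreg : (o.cof.ord).cof = o.cof := (Cardinal.isRegular_cof ho).cof_eq
    obtain ⟨y, hy⟩ := aux_long_free (κ := freeSup X) le_sup_left
      (by rw [hreg]; exact hle) hc' ht'
    have hbdd : BddAbove {c : Cardinal.{u} |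
        ∃ (o : Ordinal.{u}) (x : o.ToType → X), IsFreeSeq x ∧ c = o.card} := by
      refine ⟨#X, ?_⟩
      rintro c ⟨o', x', hx', rfl⟩
      rw [← Cardinal.mk_toType]
      exact Cardinal.mk_le_of_injective hx'.aux_injective
    have hmem : Order.succ (freeSup X) ∈ {c : Cardinal.{u} |
        ∃ (o : Ordinal.{u}) (x : o.ToType → X), IsFreeSeq x ∧ c = o.card} :=
      ⟨(Order.succ (freeSup X)).ord, y, hy, (Cardinal.card_ord _).symm⟩
    have hle2 : Order.succ (freeSup X) ≤ freeSup X :=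
      le_trans (le_csSup hbdd hmem) le_sup_right
    exact absurd hle2 (Order.lt_succ (freeSup X)).not_ge

lemma aux_tightness {κ : Cardinal.{u}} (hκ : ℵ₀ ≤ κ)
    (hrad : ∀ A : Set X, ¬ IsClosed A → ∃ p ∈ closure A \ A, ∃ (o : Ordinal.{u})
      (x : o.ToType → X), o.card ≤ κ ∧ (∀ i, x i ∈ A) ∧ ConvergesTo x p ∧ IsThin x p)
    (A : Set X) (q : X) (hq : q ∈ closure A) : ∃ B ⊆ A, #B ≤ κ ∧ q ∈ closure B := by
  set T : Set X := {z | ∃ B ⊆ A, #B ≤ κ ∧ z ∈ closure B} with hT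
  have hAT : A ⊆ T := by
    intro a ha
    exact ⟨{a}, Set.singleton_subset_iff.2 ha,
      le_trans (Cardinal.mk_singleton a).le (le_trans Cardinal.one_le_aleph0 hκ),
      subset_closure (Set.mem_singleton a)⟩
  have hTc : IsClosed T := by
    by_contra hnc
    obtain ⟨p', hp', o, xx, hcard, hxT, hc, -⟩ := hrad T hnc
    choose B hBA hBκ hBm using hxT
    have hDA : (⋃ i, B i) ⊆ A := Set.iUnion_subset hBA
    have hDκ : #(⋃ i, B i) ≤ κ := by
      refine le_trans (Cardinal.mk_iUnion_le B) ?_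
      refine le_trans (mul_le_mul' ?_ (ciSup_le' hBκ)) (Cardinal.mul_eq_self hκ).le
      rw [Cardinal.mk_toType]
      exact hcard
    have hcl : p' ∈ closure (⋃ i, B i) := by
      have h1 : Set.range xx ⊆ closure (⋃ i, B i) := by
        rintro _ ⟨i, rfl⟩
        exact closure_mono (Set.subset_iUnion B i) (hBm i)
      have h2 : closure (Set.range xx) ⊆ closure (⋃ i, B i) := by
        rw [← closure_closure (s := ⋃ i, B i)]
        exact closure_mono h1
      exact h2 (aux_mem_closure_range hc)
    exact hp'.2 ⟨⋃ i, B i, hDA, hDκ, hcl⟩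
  have hsub : closure A ⊆ T := by
    rw [← hTc.closure_eq]
    exact closure_mono hAT
  exact hsub hq

lemma aux_free_le [T2Space X] [LindelofSpace X] {κ : Cardinal.{u}} (hκ : ℵ₀ ≤ κ)
    (htight : ∀ (A : Set X) (q : X), q ∈ closure A → ∃ B ⊆ A, #B ≤ κ ∧ q ∈ closure B)
    {o : Ordinal.{u}} {x : o.ToType → X} (hx : IsFreeSeq x) : o.card ≤ κ := by
  by_contra hlt
  push_neg at hlt
  have hμo : (Order.succ κ).ord ≤ o := Cardinal.ord_le.2 (Order.succ_le_of_lt hlt)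
  set y : (Order.succ κ).ord.ToType → X := fun i => x (auxEmbed hμo i) with hy
  have hyfree : IsFreeSeq y := aux_sub_free (auxEmbed_strictMono hμo) hx
  have hyinj : Function.Injective y := hyfree.aux_injective
  have hcofμ : ((Order.succ κ).ord).cof = Order.succ κ := (Cardinal.isRegular_succ hκ).cof_eq
  have sep : ∀ q : X, q ∈ closure (Set.range y) → ∃ b, q ∉ closure (y '' {j | b ≤ j}) := by
    intro q hq
    obtain ⟨B, hBS, hBκ, hqB⟩ := htight _ q hq
    have hJκ : #(y ⁻¹' B) ≤ κ := by
      refine le_trans (Cardinal.mk_le_of_injective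
        (f := fun j : y ⁻¹' B => (⟨y j.1, j.2⟩ : B)) ?_) hBκ
      intro j1 j2 hj
      exact Subtype.ext (hyinj (congrArg Subtype.val hj))
    obtain ⟨b, hb⟩ := aux_strict_ub (y ⁻¹' B)
      (by rw [hcofμ]; exact lt_of_le_of_lt hJκ (Order.lt_succ κ))
    have hBsub : B ⊆ y '' {j | j < b} := by
      intro z hz
      obtain ⟨j, rfl⟩ := hBS hz
      exact ⟨j, hb j hz, rfl⟩
    refine ⟨b, fun hcon => ?_⟩
    have hmem : q ∈ closure (y '' {j | j < b}) ∩ closure (y '' {j | b ≤ j}) :=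
      ⟨closure_mono hBsub hqB, hcon⟩
    rw [hyfree b] at hmem
    exact absurd hmem (Set.notMem_empty q)
  choose bfun hbfun using sep
  have hcover : closure (Set.range y) ⊆
      ⋃ q : closure (Set.range y), (closure (y '' {j | bfun q.1 q.2 ≤ j}))ᶜ :=
    fun z hz => Set.mem_iUnion.2 ⟨⟨z, hz⟩, hbfun z hz⟩
  obtain ⟨t, htc, htsub⟩ := isClosed_closure.isLindelof.elim_countable_subcover _
    (fun q => isClosed_closure.isOpen_compl) hcover
  have hJ : #((fun q : closure (Set.range y) => bfun q.1 q.2) '' t) < ((Order.succ κ).ord).cof := by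
    rw [hcofμ]
    exact lt_of_le_of_lt
      (le_trans Cardinal.mk_image_le (Cardinal.mk_le_aleph0_iff.2 htc.to_subtype))
      (lt_of_le_of_lt hκ (Order.lt_succ κ))
  obtain ⟨bs, hbs⟩ := aux_strict_ub _ hJ
  have hyb : y bs ∈ closure (Set.range y) := subset_closure ⟨bs, rfl⟩
  obtain ⟨qt, hqt, hqV⟩ := Set.mem_iUnion₂.1 (htsub hyb)
  exact hqV (subset_closure ⟨bs, le_of_lt (hbs _ ⟨qt, hqt, rfl⟩), rfl⟩)

end AuxRadial

/-- for a Lindelöf Hausdorff almost radial space, `σ_C(X) = F(X)`. -/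
theorem radialChar_eq_freeSup {X : Type u} [TopologicalSpace X] [T2Space X] [LindelofSpace X]
    (hX : IsAlmostRadial X) :
    radialChar X = freeSup X := by
  have hmem := aux_mem_radialSet hX
  apply le_antisymm
  · exact csInf_le' hmem
  · have hrc : radialChar X ∈ {κ : Cardinal.{u} | ℵ₀ ≤ κ ∧ ∀ A : Set X, ¬ IsClosed A →
        ∃ p ∈ closure A \ A, ∃ (o : Ordinal.{u}) (x : o.ToType → X),
          o.card ≤ κ ∧ (∀ i, x i ∈ A) ∧ ConvergesTo x p ∧ IsThin x p} := csInf_mem ⟨_, hmem⟩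
    obtain ⟨h1, h2⟩ := hrc
    show ℵ₀ ⊔ sSup {c : Cardinal.{u} |
      ∃ (o : Ordinal.{u}) (x : o.ToType → X), IsFreeSeq x ∧ c = o.card} ≤ radialChar X
    refine sup_le h1 (csSup_le' ?_)
    rintro c ⟨o, x, hxf, rfl⟩
    exact aux_free_le h1 (aux_tightness h1 h2) hxf
end

section
/- Let X be a Lindelöf Hausdorff almost radial space. Then X is sequential if and only if every free sequence in X is countable (i.e., F(X) ≤ ω). -/
open Cardinal Set TopologicalSpace

universe u

open Filter Topology

/-- countable tightness of sequential spaces -/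
lemma my_seq_tight {X : Type u} [TopologicalSpace X] [SequentialSpace X]
    {A : Set X} {p : X} (hp : p ∈ closure A) :
    ∃ B ⊆ A, B.Countable ∧ p ∈ closure B := by
  set D := {y : X | ∃ B ⊆ A, B.Countable ∧ y ∈ closure B} with hD
  have hAD : A ⊆ D := fun a ha => ⟨{a}, by simpa using ha, countable_singleton a,
    subset_closure rfl⟩
  have hDc : IsSeqClosed D := by
    intro y q hy hq
    choose B hBA hBc hyB using hy
    refine ⟨⋃ n, B n, iUnion_subset hBA, countable_iUnion hBc, ?_⟩
    exact isClosed_closure.mem_of_tendsto hq (Eventually.of_forall fun n =>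
      closure_mono (subset_iUnion B n) (hyB n))
  exact closure_minimal hAD hDc.isClosed hp

/-- strictly monotone reindexing preserves freeness -/
lemma my_free_comp {X : Type u} [TopologicalSpace X] {ι κ : Type u} [LinearOrder ι]
    [LinearOrder κ] {x : ι → X} (hx : IsFreeSeq x) {f : κ → ι} (hf : StrictMono f) :
    IsFreeSeq (x ∘ f) := by
  intro i
  rw [← subset_empty_iff, ← hx (f i)]
  refine inter_subset_inter (closure_mono ?_) (closure_mono ?_)
  · rintro _ ⟨j, hj, rfl⟩; exact ⟨f j, hf hj, rfl⟩
  · rintro _ ⟨j, hj, rfl⟩; exact ⟨f j, hf.monotone hj, rfl⟩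

/-- countable sets are strictly bounded, given that ℕ-families are -/
lemma my_ctble_bdd {T : Type u} [LinearOrder T] [Nonempty T] (h : ∀ f : ℕ → T, ∃ b, ∀ n, f n < b)
    {S : Set T} (hS : S.Countable) : ∃ b, ∀ s ∈ S, s < b := by
  rcases S.eq_empty_or_nonempty with rfl | hne
  · exact ⟨Classical.arbitrary T, by simp⟩
  · obtain ⟨f, rfl⟩ := hS.exists_eq_range hne
    obtain ⟨b, hb⟩ := h f
    exact ⟨b, by rintro s ⟨n, rfl⟩; exact hb n⟩

lemma my_omega1_nonempty : Nonempty ((aleph 1).ord).ToType := by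
  rw [Ordinal.nonempty_toType_iff]
  simp only [ne_eq, Cardinal.ord_eq_zero]
  exact fun h => (aleph0_lt_aleph_one.trans_le h.le).not_gt (by simp [Cardinal.aleph0_pos]) 

lemma my_omega1_bdd (f : ℕ → ((aleph 1).ord).ToType) : ∃ b, ∀ n, f n < b := by
  let e := (Ordinal.ToType.mk (o := (aleph 1).ord))
  have hlim : Order.IsSuccLimit ((aleph 1).ord) := Cardinal.isSuccLimit_ord (aleph0_le_aleph 1)
  have hs : (⨆ n, Order.succ (e.symm (f n)).1) < (aleph 1).ord := by
    apply Ordinal.iSup_lt_ord_lift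
    · rw [Cardinal.isRegular_aleph_one.cof_eq, mk_nat, Cardinal.lift_aleph0]
      exact aleph0_lt_aleph_one
    · exact fun n => hlim.succ_lt (e.symm (f n)).2
  refine ⟨e ⟨_, hs⟩, fun n => ?_⟩
  have h2 : e.symm (f n) < (⟨_, hs⟩ : Set.Iio ((aleph 1).ord)) := by
    rw [← Subtype.coe_lt_coe]
    exact lt_of_lt_of_le (Order.lt_succ _) (Ordinal.le_iSup (fun n => Order.succ (e.symm (f n)).1) n)
  calc f n = e (e.symm (f n)) := (e.apply_symm_apply _).symm
  _ < e ⟨_, hs⟩ := e.lt_iff_lt.2 h2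

lemma my_omega1_ctble_bdd {S : Set ((aleph 1).ord).ToType} (hS : S.Countable) :
    ∃ b, ∀ s ∈ S, s < b :=
  have := my_omega1_nonempty
  my_ctble_bdd my_omega1_bdd hS

lemma my_Iio_ctble (α : ((aleph 1).ord).ToType) : (Set.Iio α).Countable := by
  rw [countable_iff_lt_aleph_one]
  exact Cardinal.mk_Iio_ord_toType α

/-- a Lindelöf Hausdorff almost radial space is sequential iff every free
sequence in it is countable. -/
theorem sequential_iff_freeSeq_countable {X : Type u} [TopologicalSpace X] [T2Space X]
    [LindelofSpace X] (hX : IsAlmostRadial X) :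
    SequentialSpace X ↔ ∀ (o : Ordinal.{u}) (x : o.ToType → X), IsFreeSeq x → o.card ≤ ℵ₀ := by
  constructor
  · intro hseq o x hfree
    by_contra hcard
    push_neg at hcard
    have h1 : (aleph 1).ord ≤ o := by
      rw [Cardinal.ord_le, ← Cardinal.succ_aleph0]
      exact Order.succ_le_of_lt hcard
    let e := Ordinal.initialSegToType h1
    set y : ((aleph 1).ord).ToType → X := x ∘ e with hy
    have hyfree : IsFreeSeq y := my_free_comp hfree e.strictMono
    have hstep : ∀ p ∈ closure (range y), ∃ b, p ∉ closure (y '' {j | b ≤ j}) := by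
      intro p hp
      obtain ⟨B, hBs, hBc, hpB⟩ := my_seq_tight hp
      have hidx : ∀ b : B, ∃ i, y i = b := fun b => hBs b.2
      choose idx hidx' using hidx
      have := hBc.to_subtype
      obtain ⟨b, hb⟩ := my_omega1_ctble_bdd (Set.countable_range idx)
      have hBsub : B ⊆ y '' {j | j < b} := by
        intro a ha
        exact ⟨idx ⟨a, ha⟩, hb _ ⟨⟨a, ha⟩, rfl⟩, hidx' ⟨a, ha⟩⟩
      refine ⟨b, fun hptail => ?_⟩
      have : p ∈ (∅ : Set X) := (hyfree b) ▸ ⟨closure_mono hBsub hpB, hptail⟩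
      exact this
    have := my_omega1_nonempty
    choose! b hb using hstep
    have hLin : IsLindelof (closure (range y)) := isClosed_closure.isLindelof
    obtain ⟨t, htc, htcov⟩ := hLin.elim_countable_subcover
      (fun p : closure (range y) => (closure (y '' {j | b p ≤ j}))ᶜ)
      (fun p => isClosed_closure.isOpen_compl)
      (fun q hq => mem_iUnion.2 ⟨⟨q, hq⟩, hb q hq⟩)
    have := htc.to_subtype
    obtain ⟨bs, hbs⟩ := my_omega1_ctble_bdd (Set.countable_range (fun p : t => b p.1))
    have hymem : y bs ∈ closure (range y) := subset_closure (mem_range_self bs)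
    obtain ⟨q, hqt, hqmem⟩ := mem_iUnion₂.1 (htcov hymem)
    exact hqmem (subset_closure ⟨bs, le_of_lt (hbs _ ⟨⟨q, hqt⟩, rfl⟩), rfl⟩)
  · intro hcount
    refine ⟨fun A hA => ?_⟩
    by_contra hAc
    obtain ⟨p, ⟨hpcl, hpA⟩, o, x, hxA, hconv, hthin⟩ := hX A hAc
    obtain ⟨b₀, -⟩ := hconv univ isOpen_univ (mem_univ p)
    have hne : Nonempty o.ToType := ⟨b₀⟩
    by_cases hmax : ∃ m : o.ToType, ∀ a, a ≤ m
    · obtain ⟨m, hm⟩ := hmax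
      have hpm : p ∈ closure {x m} := by
        rw [mem_closure_iff]
        intro V hV hpV
        obtain ⟨c, hc⟩ := hconv V hV hpV
        exact ⟨x m, hc m (hm c), rfl⟩
      rw [closure_singleton, mem_singleton_iff] at hpm
      exact hpA (hpm ▸ hxA m)
    by_cases hcof : ∃ f : ℕ → o.ToType, ∀ c, ∃ n, c ≤ f n
    · obtain ⟨f, hf⟩ := hcof
      let g : ℕ → o.ToType := fun n => Nat.rec (f 0) (fun k gk => max gk (f (k + 1))) n
      have hg1 : Monotone g := monotone_nat_of_le_succ fun n => le_max_left _ _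
      have hg2 : ∀ n, f n ≤ g n := fun n => by
        cases n with
        | zero => exact le_refl _
        | succ k => exact le_max_right _ _
      have htd : Filter.Tendsto (fun n => x (g n)) atTop (𝓝 p) := by
        rw [tendsto_nhds]
        intro V hV hpV
        obtain ⟨c, hc⟩ := hconv V hV hpV
        obtain ⟨n₀, hn₀⟩ := hf c
        exact Filter.mem_atTop_sets.2 ⟨n₀, fun n hn =>
          hc (g n) (le_trans (le_trans hn₀ (hg2 n₀)) (hg1 hn))⟩
      exact hpA (hA (fun n => hxA (g n)) htd)
    push_neg at hcof
    have tailesc : ∀ C : Set X, IsClosed C → p ∉ C →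
        ∃ c, ∀ q ∈ C, q ∉ closure (x '' {j | c ≤ j}) := by
      intro C hC hpC
      have hVq : ∀ q : C, ∃ (V : Set X) (c : o.ToType), IsOpen V ∧ (q : X) ∈ V ∧
          ∀ q' ∈ V, q' ∉ closure (x '' {j | c ≤ j}) := by
        intro q
        obtain ⟨U, V, hU, hV, hpU, hqV, hUV⟩ :=
          t2_separation (show p ≠ (q : X) from fun h => hpC (h ▸ q.2))
        obtain ⟨c, hc⟩ := hconv U hU hpU
        refine ⟨V, c, hV, hqV, fun q' hq' hq'cl => ?_⟩
        have h1 : x '' {j | c ≤ j} ⊆ U := by rintro _ ⟨j, hj, rfl⟩; exact hc j hj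
        have h2 : closure (x '' {j | c ≤ j}) ⊆ Vᶜ :=
          closure_minimal (fun z hz hzV => Set.disjoint_left.1 hUV (h1 hz) hzV)
            hV.isClosed_compl
        exact h2 hq'cl hq'
      choose V c hVo hVm hVd using hVq
      obtain ⟨t, htc, htcov⟩ := (hC.isLindelof).elim_countable_subcover V hVo
        (fun q hq => mem_iUnion.2 ⟨⟨q, hq⟩, hVm _⟩)
      have := htc.to_subtype
      obtain ⟨c₁, hc₁⟩ := my_ctble_bdd hcof (Set.countable_range fun q : t => c q.1)
      refine ⟨c₁, fun q hq hqcl => ?_⟩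
      obtain ⟨q', hq't, hqV⟩ := mem_iUnion₂.1 (htcov hq)
      refine hVd q' q hqV (closure_mono ?_ hqcl)
      rintro _ ⟨j, hj, rfl⟩
      exact ⟨j, le_trans (le_of_lt (hc₁ _ ⟨⟨q', hq't⟩, rfl⟩)) hj, rfl⟩
    have key : ∀ S : Set o.ToType, S.Countable →
        ∃ c, (∀ s ∈ S, s < c) ∧ closure (x '' S) ∩ closure (x '' {j | c ≤ j}) = ∅ := by
      intro S hS
      obtain ⟨u, hu⟩ := my_ctble_bdd hcof hS
      have hpS : p ∉ closure (x '' S) := fun hp =>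
        hthin u (closure_mono (image_mono (f := x) fun s hs => hu s hs) hp)
      obtain ⟨c₁, hc₁⟩ := tailesc _ isClosed_closure hpS
      refine ⟨max u c₁, fun s hs => lt_of_lt_of_le (hu s hs) (le_max_left _ _), ?_⟩
      rw [eq_empty_iff_forall_notMem]
      rintro q ⟨hq1, hq2⟩
      refine hc₁ q hq1 (closure_mono ?_ hq2)
      rintro _ ⟨j, hj, rfl⟩
      exact ⟨j, le_trans (le_max_right u c₁) hj, rfl⟩
    have hc' : ∀ (α : ((aleph 1).ord).ToType) (g : Set.Iio α → o.ToType),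
        (Set.range g).Countable := fun α g =>
      have := (my_Iio_ctble α).to_subtype
      Set.countable_range g
    let β : ((aleph 1).ord).ToType → o.ToType := WellFounded.fix wellFounded_lt
      (fun α ih => (key (Set.range fun γ : Set.Iio α => ih γ.1 γ.2) (hc' α _)).choose)
    have hβeq : ∀ α, β α =
        (key (Set.range fun γ : Set.Iio α => β γ.1) (hc' α _)).choose := fun α =>
      WellFounded.fix_eq _ _ α
    have hspec : ∀ α, (∀ s ∈ Set.range (fun γ : Set.Iio α => β γ.1), s < β α) ∧
        closure (x '' Set.range (fun γ : Set.Iio α => β γ.1)) ∩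
          closure (x '' {j | β α ≤ j}) = ∅ := by
      intro α
      rw [hβeq α]
      exact (key (Set.range fun γ : Set.Iio α => β γ.1) (hc' α _)).choose_spec
    have hβmono : StrictMono β := fun γ α h => (hspec α).1 (β γ) ⟨⟨γ, h⟩, rfl⟩
    have hfreeβ : IsFreeSeq (x ∘ β) := by
      intro i
      rw [← subset_empty_iff, ← (hspec i).2]
      refine inter_subset_inter (closure_mono ?_) (closure_mono ?_)
      · rintro _ ⟨j, hj, rfl⟩; exact ⟨β j, ⟨⟨j, hj⟩, rfl⟩, rfl⟩
      · rintro _ ⟨j, hj, rfl⟩; exact ⟨β j, hβmono.monotone hj, rfl⟩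
    have hcontra := hcount ((aleph 1).ord) (x ∘ β) hfreeβ
    rw [Cardinal.card_ord] at hcontra
    exact aleph0_lt_aleph_one.not_ge hcontra
end

section
/- For every almost radial topological space X, the radial character σ_C(X) equals the tightness t(X). -/
open Cardinal Set TopologicalSpace

universe u

section Aux

variable {X : Type u} [TopologicalSpace X]

private lemma convergesTo_mem_closure_range {o : Ordinal.{u}} {x : o.ToType → X} {p : X}
    (hconv : ConvergesTo x p) : p ∈ closure (Set.range x) := by
  rw [mem_closure_iff]
  intro V hV hpV
  obtain ⟨b, hb⟩ := hconv V hV hpV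
  exact ⟨x b, hb b le_rfl, Set.mem_range_self b⟩

private lemma aux_radial_to_tight {κ : Cardinal.{u}} (hκ : ℵ₀ ≤ κ)
    (hr : ∀ A : Set X, ¬ IsClosed A →
      ∃ p ∈ closure A \ A, ∃ (o : Ordinal.{u}) (x : o.ToType → X),
        o.card ≤ κ ∧ (∀ i, x i ∈ A) ∧ ConvergesTo x p ∧ IsThin x p) :
    ∀ (A : Set X) (p : X), p ∈ closure A → ∃ B ⊆ A, #B ≤ κ ∧ p ∈ closure B := by
  intro A p hp
  set C : Set X := {y : X | ∃ B ⊆ A, #B ≤ κ ∧ y ∈ closure B} with hC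
  by_cases hpC : p ∈ C
  · exact hpC
  have hAC : A ⊆ C := by
    intro a ha
    exact ⟨{a}, Set.singleton_subset_iff.mpr ha,
      by simpa using (Cardinal.one_lt_aleph0.le.trans hκ), subset_closure rfl⟩
  have hCnc : ¬ IsClosed C := fun h => hpC (h.closure_subset (closure_mono hAC hp))
  obtain ⟨q, hq, o, x, hcard, hxC, hconv, -⟩ := hr C hCnc
  exfalso
  apply hq.2
  choose B hBA hBκ hxB using hxC
  refine ⟨⋃ i, B i, Set.iUnion_subset hBA, ?_, ?_⟩
  · calc #(⋃ i, B i) ≤ Cardinal.sum fun i => #(B i) := Cardinal.mk_iUnion_le_sum_mk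
      _ ≤ Cardinal.sum fun _ : o.ToType => κ := Cardinal.sum_le_sum _ _ hBκ
      _ = #o.ToType * κ := Cardinal.sum_const' _ _
      _ ≤ κ * κ := by
          refine mul_le_mul_left ?_ κ
          rwa [Cardinal.mk_toType]
      _ = κ := Cardinal.mul_eq_self hκ
  · have h1 : q ∈ closure (Set.range x) := convergesTo_mem_closure_range hconv
    have h2 : Set.range x ⊆ closure (⋃ i, B i) :=
      Set.range_subset_iff.mpr fun i => closure_mono (Set.subset_iUnion B i) (hxB i)
    exact closure_minimal h2 isClosed_closure h1

private lemma aux_tight_to_radial (hX : IsAlmostRadial X) {κ : Cardinal.{u}} (hκ : ℵ₀ ≤ κ)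
    (ht : ∀ (A : Set X) (p : X), p ∈ closure A → ∃ B ⊆ A, #B ≤ κ ∧ p ∈ closure B) :
    ∀ A : Set X, ¬ IsClosed A →
      ∃ p ∈ closure A \ A, ∃ (o : Ordinal.{u}) (x : o.ToType → X),
        o.card ≤ κ ∧ (∀ i, x i ∈ A) ∧ ConvergesTo x p ∧ IsThin x p := by
  intro A hA
  obtain ⟨p, hp, o, x, hxA, hconv, hthin⟩ := hX A hA
  have hcl : p ∈ closure (Set.range x) := convergesTo_mem_closure_range hconv
  obtain ⟨B, hBx, hBκ, hpB⟩ := ht _ p hcl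
  have hsel : ∀ b : B, ∃ i, x i = (b : X) := fun b => hBx b.2
  choose f hf using hsel
  set I : Set o.ToType := Set.range f with hI
  have hBI : B ⊆ x '' I := fun b hb => ⟨f ⟨b, hb⟩, Set.mem_range_self _, hf _⟩
  have hpI : p ∈ closure (x '' I) := closure_mono hBI hpB
  by_cases hbd : ∃ γ : o.ToType, ∀ i ∈ I, i < γ
  · obtain ⟨γ, hγ⟩ := hbd
    exact absurd (closure_mono (Set.image_mono fun i hi => hγ i hi) hpI) (hthin γ)
  · push_neg at hbd
    letI : IsWellOrder o.ToType ((· < ·) : o.ToType → o.ToType → Prop) := isWellOrder_lt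
    letI : IsWellOrder (Subtype I) (Subrel ((· < ·) : o.ToType → o.ToType → Prop) I) :=
      Subrel.instIsWellOrderSubtype _ I
    set o' : Ordinal.{u} := Ordinal.type (Subrel ((· < ·) : o.ToType → o.ToType → Prop) I)
      with ho'
    have hcard : o'.card ≤ κ := by
      rw [ho', Ordinal.card_type]
      calc #I ≤ #B := Cardinal.mk_range_le
        _ ≤ κ := hBκ
    letI : IsWellOrder o'.ToType ((· < ·) : o'.ToType → o'.ToType → Prop) := isWellOrder_lt
    have htype : Ordinal.type ((· < ·) : o'.ToType → o'.ToType → Prop)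
        = Ordinal.type (Subrel ((· < ·) : o.ToType → o.ToType → Prop) I) := by
      rw [Ordinal.type_toType, ho']
    obtain ⟨e⟩ := Ordinal.type_eq.mp htype
    refine ⟨p, hp, o', fun a => x (e a).1, hcard, fun a => hxA _, ?_, ?_⟩
    · intro V hV hpV
      obtain ⟨b, hb⟩ := hconv V hV hpV
      obtain ⟨i, hiI, hbi⟩ := hbd b
      refine ⟨e.symm ⟨i, hiI⟩, fun a ha => hb _ ?_⟩
      rcases eq_or_lt_of_le ha with h | h
      · have : e a = ⟨i, hiI⟩ := by rw [← h, e.apply_symm_apply]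
        rw [this]
        exact hbi
      · have h2 : ((e (e.symm ⟨i, hiI⟩)) : I).1 < (e a).1 := e.map_rel_iff.mpr h
        rw [e.apply_symm_apply] at h2
        exact (hbi).trans h2.le
    · intro i
      have hsub : (fun a => x (e a).1) '' {j | j < i} ⊆ x '' {j | j < (e i).1} := by
        rintro _ ⟨j, hj, rfl⟩
        exact ⟨(e j).1, e.map_rel_iff.mpr hj, rfl⟩
      exact fun h => hthin (e i).1 (closure_mono hsub h)


end Aux

/-- for every almost radial space, `σ_C(X) = t(X)`. -/
theorem radialChar_eq_tightness {X : Type u} [TopologicalSpace X] (hX : IsAlmostRadial X) :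
    radialChar X = tightnessCard X := by
  have hset : {κ : Cardinal.{u} | ℵ₀ ≤ κ ∧ ∀ A : Set X, ¬ IsClosed A →
      ∃ p ∈ closure A \ A, ∃ (o : Ordinal.{u}) (x : o.ToType → X),
        o.card ≤ κ ∧ (∀ i, x i ∈ A) ∧ ConvergesTo x p ∧ IsThin x p}
      = {κ : Cardinal.{u} | ℵ₀ ≤ κ ∧ ∀ (A : Set X) (p : X), p ∈ closure A →
        ∃ B ⊆ A, #B ≤ κ ∧ p ∈ closure B} := by
    ext κ
    constructor
    · rintro ⟨hκ, hr⟩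
      exact ⟨hκ, aux_radial_to_tight hκ hr⟩
    · rintro ⟨hκ, hti⟩
      exact ⟨hκ, aux_tight_to_radial hX hκ hti⟩
  unfold radialChar tightnessCard
  rw [hset]
end

section
/- Let κ be an infinite cardinal and X = σ(2^κ) ∪ {𝟏} ⊆ 2^κ as a subspace. Then every free sequence in X is countable. -/
open Cardinal Set TopologicalSpace

universe u

section AuxFree

/-- In a linear order, a set all of whose initial segments (within the set) are finite
is countable. -/
lemma countable_of_initialSegs_finite {ν : Type*} [LinearOrder ν] {T : Set ν}
    (h : ∀ γ ∈ T, (T ∩ {j | j < γ}).Finite) : T.Countable := by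
  rw [Set.countable_iff_exists_injective]
  refine ⟨fun γ => (h γ γ.2).toFinset.card, ?_⟩
  have mono : ∀ a b : T, (a : ν) < (b : ν) →
      (h a a.2).toFinset.card < (h b b.2).toFinset.card := by
    intro a b hab
    apply Finset.card_lt_card
    rw [Finset.ssubset_iff_of_subset]
    · exact ⟨a, by simp [a.2, hab], by simp⟩
    · intro i hi
      simp only [Set.Finite.mem_toFinset, Set.mem_inter_iff, Set.mem_setOf_eq] at hi ⊢
      exact ⟨hi.1, hi.2.trans hab⟩
  intro a b hab
  by_contra hne
  rcases lt_or_gt_of_ne (fun e : (a : ν) = (b : ν) => hne (Subtype.ext e)) with h' | h'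
  · exact absurd hab (mono a b h').ne
  · exact absurd hab.symm (mono b a h').ne

/-- Splitting lemma: an uncountable subset of a well-order can be split at some point
into an infinite initial part and an infinite final part. -/
lemma exists_split {ν : Type*} [LinearOrder ν] [WellFoundedLT ν] {T : Set ν}
    (hT : ¬ T.Countable) :
    ∃ β : ν, (T ∩ {j | j < β}).Infinite ∧ (T ∩ {j | β ≤ j}).Infinite := by
  set B := {β | β ∈ T ∧ (T ∩ {j | j < β}).Infinite} with hBdef
  have hB : B.Nonempty := by
    by_contra hemp
    rw [Set.not_nonempty_iff_eq_empty] at hemp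
    apply hT
    apply countable_of_initialSegs_finite
    intro γ hγ
    by_contra hinf
    exact absurd (hemp ▸ (⟨hγ, hinf⟩ : γ ∈ B)) (Set.notMem_empty γ)
  obtain ⟨β, hβB, hmin⟩ := (wellFounded_lt (α := ν)).has_min B hB
  refine ⟨β, hβB.2, ?_⟩
  have hIc : (T ∩ {j | j < β}).Countable := by
    apply countable_of_initialSegs_finite
    intro γ hγ
    have hγB : γ ∉ B := fun hmem => hmin γ hmem hγ.2
    have : (T ∩ {j | j < γ}).Finite := by
      by_contra hinf
      exact hγB ⟨hγ.1, hinf⟩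
    exact this.subset (fun i hi => ⟨hi.1.1, hi.2⟩)
  have htail : ¬ (T ∩ {j | β ≤ j}).Countable := by
    intro hc
    apply hT
    have : T ⊆ (T ∩ {j | j < β}) ∪ (T ∩ {j | β ≤ j}) := by
      intro j hj
      rcases lt_or_ge j β with h | h
      · exact Or.inl ⟨hj, h⟩
      · exact Or.inr ⟨hj, h⟩
    exact (hIc.union hc).mono this
  exact fun hfin => htail hfin.countable

/-- The Δ-system lemma for uncountable families of finite sets of fixed size. -/
lemma delta_system_aux {ν ι : Type*} [DecidableEq ι] (n : ℕ) :
    ∀ (S : Set ν) (f : ν → Finset ι), ¬ S.Countable → (∀ a ∈ S, (f a).card = n) →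
    ∃ T ⊆ S, ¬ T.Countable ∧ ∃ r : Finset ι,
      (∀ a ∈ T, r ⊆ f a) ∧ ∀ a ∈ T, ∀ b ∈ T, a ≠ b → f a ∩ f b = r := by
  induction n with
  | zero =>
    intro S f hS hcard
    refine ⟨S, Set.Subset.rfl, hS, ∅, fun a _ => Finset.empty_subset _, ?_⟩
    intro a ha b hb _
    rw [Finset.card_eq_zero.mp (hcard a ha)]
    simp
  | succ n ih =>
    intro S f hS hcard
    by_cases hA : ∃ e : ι, ¬ {a ∈ S | e ∈ f a}.Countable
    · obtain ⟨e, he⟩ := hA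
      obtain ⟨T, hTS', hT, r, hr, hΔ⟩ := ih {a ∈ S | e ∈ f a} (fun a => (f a).erase e) he
        (fun a ha => by rw [Finset.card_erase_of_mem ha.2, hcard a ha.1]; rfl)
      refine ⟨T, fun a ha => (hTS' ha).1, hT, insert e r, ?_, ?_⟩
      · intro a ha
        rw [Finset.insert_subset_iff]
        exact ⟨(hTS' ha).2, (hr a ha).trans (Finset.erase_subset _ _)⟩
      · intro a ha b hb hab
        have hfa : f a = insert e ((f a).erase e) := (Finset.insert_erase (hTS' ha).2).symm
        have hfb : f b = insert e ((f b).erase e) := (Finset.insert_erase (hTS' hb).2).symm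
        rw [hfa, hfb, ← hΔ a ha b hb hab]
        ext i
        simp only [Finset.mem_inter, Finset.mem_insert]
        tauto
    · push_neg at hA
      have hn : n + 1 ≠ 0 := Nat.succ_ne_zero n
      -- Zorn's lemma: maximal pairwise disjoint subfamily
      have hchainub : ∀ c ⊆ {T : Set ν | T ⊆ S ∧ ∀ a ∈ T, ∀ b ∈ T, a ≠ b → f a ∩ f b = ∅},
          IsChain (fun x1 x2 => x1 ⊆ x2) c → c.Nonempty →
          ∃ ub ∈ {T : Set ν | T ⊆ S ∧ ∀ a ∈ T, ∀ b ∈ T, a ≠ b → f a ∩ f b = ∅},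
            ∀ s ∈ c, s ⊆ ub := by
        intro c hc hchain _
        refine ⟨⋃₀ c, ⟨?_, ?_⟩, fun s hs => Set.subset_sUnion_of_mem hs⟩
        · exact fun a ⟨t, htc, hat⟩ => (hc htc).1 hat
        · rintro a ⟨t₁, ht₁, ha⟩ b ⟨t₂, ht₂, hb⟩ hab
          rcases hchain.total ht₁ ht₂ with h | h
          · exact (hc ht₂).2 a (h ha) b hb hab
          · exact (hc ht₁).2 a ha b (h hb) hab
      obtain ⟨M, -, hM⟩ := zorn_subset_nonempty
        {T : Set ν | T ⊆ S ∧ ∀ a ∈ T, ∀ b ∈ T, a ≠ b → f a ∩ f b = ∅}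
        hchainub ∅ ⟨Set.empty_subset _, by simp⟩
      refine ⟨M, hM.prop.1, ?_, ∅, fun a _ => Finset.empty_subset _, hM.prop.2⟩
      intro hMc
      set E : Set ι := ⋃ a ∈ M, (f a : Set ι) with hEdef
      have hEc : E.Countable := hMc.biUnion (fun a _ => (f a).countable_toSet)
      have hbad : {a ∈ S | ∃ e ∈ E, e ∈ f a}.Countable := by
        have hsub : {a ∈ S | ∃ e ∈ E, e ∈ f a} ⊆ ⋃ e ∈ E, {a ∈ S | e ∈ f a} := by
          rintro a ⟨haS, e, heE, hef⟩
          exact Set.mem_biUnion heE ⟨haS, hef⟩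
        exact (hEc.biUnion (fun e _ => hA e)).mono hsub
      obtain ⟨a₀, ha₀S, ha₀⟩ : ∃ a₀ ∈ S, ¬ ∃ e ∈ E, e ∈ f a₀ := by
        by_contra h
        push_neg at h
        exact hS (hbad.mono (fun a ha => Set.mem_sep ha (h a ha)))
      have hfa₀ : (f a₀).Nonempty := Finset.card_pos.mp (by rw [hcard a₀ ha₀S]; omega)
      have ha₀M : a₀ ∉ M := by
        intro hmem
        obtain ⟨e, he⟩ := hfa₀
        exact ha₀ ⟨e, Set.mem_biUnion hmem he, he⟩
      have hins : insert a₀ M ∈ {T : Set ν | T ⊆ S ∧ ∀ a ∈ T, ∀ b ∈ T, a ≠ b → f a ∩ f b = ∅} := by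
        constructor
        · exact Set.insert_subset ha₀S hM.prop.1
        · have key : ∀ b ∈ M, f a₀ ∩ f b = ∅ := by
            intro b hb
            rw [Finset.eq_empty_iff_forall_notMem]
            intro i hi
            rw [Finset.mem_inter] at hi
            exact ha₀ ⟨i, Set.mem_biUnion hb hi.2, hi.1⟩
          rintro a (rfl | ha) b (rfl | hb) hab
          · exact absurd rfl hab
          · exact key b hb
          · rw [Finset.inter_comm]; exact key a ha
          · exact hM.prop.2 a ha b hb hab
      exact ha₀M (hM.mem_of_prop_insert hins)

end AuxFree

section Aux2


variable {ι ν : Type u}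

/-- The characteristic function of the root of a Δ-system is in the closure of any infinite
subfamily. -/
lemma chi_mem_closure
    (x : ν → ↥({x : ι → Bool | {i | x i = true}.Finite} ∪
      {fun _ => true} : Set (ι → Bool)))
    (r : Finset ι) {T : Set ν} (hT : T.Infinite)
    (hsub : ∀ a ∈ T, ∀ i ∈ r, (x a).1 i = true)
    (hdisj : ∀ a ∈ T, ∀ b ∈ T, a ≠ b → ∀ i, (x a).1 i = true → (x b).1 i = true → i ∈ r)
    (p : ↥({x : ι → Bool | {i | x i = true}.Finite} ∪
      {fun _ => true} : Set (ι → Bool)))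
    (hp : ∀ i, p.1 i = true ↔ i ∈ r) :
    p ∈ closure (x '' T) := by
  rw [mem_closure_iff]
  intro U hU hpU
  obtain ⟨V, hV, rfl⟩ := isOpen_induced_iff.1 hU
  obtain ⟨I, u, h1, h2⟩ := isOpen_pi_iff.1 hV p.1 hpU
  set Bad := {a ∈ T | ∃ i ∈ I, i ∉ r ∧ (x a).1 i = true} with hBaddef
  have hBadfin : Bad.Finite := by
    have hs : Bad ⊆ ⋃ i ∈ (I : Set ι), {a ∈ T | i ∉ r ∧ (x a).1 i = true} := by
      rintro a ⟨haT, i, hiI, hir, hxa⟩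
      exact Set.mem_biUnion hiI ⟨haT, hir, hxa⟩
    refine Set.Finite.subset (Set.Finite.biUnion I.finite_toSet ?_) hs
    intro i _
    apply Set.Subsingleton.finite
    rintro a ⟨haT, hir, hxa⟩ b ⟨hbT, -, hxb⟩
    by_contra hab
    exact hir (hdisj a haT b hbT hab i hxa hxb)
  obtain ⟨a, haT, haBad⟩ := (hT.diff hBadfin).nonempty
  refine ⟨x a, ?_, Set.mem_image_of_mem x haT⟩
  show (x a).1 ∈ V
  apply h2
  intro i hiI
  have heq : (x a).1 i = p.1 i := by
    by_cases hir : i ∈ r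
    · rw [hsub a haT i hir, ((hp i).mpr hir)]
    · have hxa : (x a).1 i ≠ true := fun h => haBad ⟨haT, i, hiI, hir, h⟩
      have hpi : p.1 i ≠ true := fun h => hir ((hp i).1 h)
      rw [Bool.eq_false_iff.mpr hxa, Bool.eq_false_iff.mpr hpi]
  rw [heq]
  exact (h1 i hiI).2

end Aux2

/-- every free sequence in `σ(2^κ) ∪ {𝟏}` is countable. -/
theorem sigma_product_freeSeq_countable {ι : Type u} (hι : ℵ₀ ≤ #ι) (o : Ordinal.{u})
    (x : o.ToType → ↥({x : ι → Bool | {i | x i = true}.Finite} ∪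
      {fun _ => true} : Set (ι → Bool)))
    (hx : IsFreeSeq x) : o.card ≤ ℵ₀ := by
  classical
  by_contra hlarge
  have huniv : ¬ (Set.univ : Set o.ToType).Countable := by
    rw [Set.countable_univ_iff]
    intro h
    exact hlarge (by rw [← Cardinal.mk_toType]; exact Cardinal.mk_le_aleph0)
  -- a free sequence is injective
  have key : ∀ a b : o.ToType, a < b → x a = x b → False := by
    intro a b h hab
    have h1 : x a ∈ closure (x '' {j | j < b}) := subset_closure ⟨a, h, rfl⟩
    have h2 : x b ∈ closure (x '' {j | b ≤ j}) := subset_closure ⟨b, le_refl b, rfl⟩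
    rw [← hab] at h2
    have := Set.mem_inter h1 h2
    rw [hx b] at this
    exact this
  have hinj : Function.Injective x := by
    intro a b hab
    by_contra hne
    rcases lt_or_gt_of_ne hne with h | h
    · exact key a b h hab
    · exact key b a h hab.symm
  -- the set of indices whose point has finite support
  set supp : o.ToType → Set ι := fun a => {i | (x a).1 i = true} with hsuppdef
  set S : Set o.ToType := {a | (supp a).Finite} with hSdef
  have hSc : ¬ S.Countable := by
    intro hS
    have hone : ∀ c ∈ Sᶜ, x c = ⟨fun _ => true, Set.mem_union_right _ rfl⟩ := by
      intro c hc
      rcases (x c).2 with h | h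
      · exact absurd h hc
      · exact Subtype.ext h
    have hcompl : (Sᶜ : Set o.ToType).Subsingleton := by
      intro a ha b hb
      exact hinj (by rw [hone a ha, hone b hb])
    have : (Set.univ : Set o.ToType).Countable := by
      have : (Set.univ : Set o.ToType) = S ∪ Sᶜ := (Set.union_compl_self S).symm
      rw [this]
      exact hS.union hcompl.countable
    exact huniv this
  -- supports as finsets
  set f : o.ToType → Finset ι := fun a => if h : (supp a).Finite then h.toFinset else ∅ with hfdef
  have hf : ∀ a ∈ S, ((f a) : Set ι) = supp a := by
    intro a ha
    have ha' : (supp a).Finite := ha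
    show ((if h : (supp a).Finite then h.toFinset else ∅ : Finset ι) : Set ι) = supp a
    rw [dif_pos ha', Set.Finite.coe_toFinset]
  -- pigeonhole on the cardinality of supports
  obtain ⟨n, hn⟩ : ∃ n : ℕ, ¬ {a ∈ S | (f a).card = n}.Countable := by
    by_contra h
    push_neg at h
    apply hSc
    have hsub : S ⊆ ⋃ n : ℕ, {a ∈ S | (f a).card = n} :=
      fun a ha => Set.mem_iUnion.2 ⟨(f a).card, ha, rfl⟩
    exact (Set.countable_iUnion h).mono hsub
  -- Δ-system
  obtain ⟨T, hTS, hTc, r, hroot, hΔ⟩ := delta_system_aux n {a ∈ S | (f a).card = n} f hn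
    (fun a ha => ha.2)
  have hTS' : T ⊆ S := fun a ha => (hTS ha).1
  -- the root's characteristic function
  set p : ↥({x : ι → Bool | {i | x i = true}.Finite} ∪
      {fun _ => true} : Set (ι → Bool)) :=
    ⟨fun i => if i ∈ r then true else false, Set.mem_union_left _ (by
      have : {i | (if i ∈ r then true else false) = true} = (r : Set ι) := by
        ext i; by_cases h : i ∈ r <;> simp [h]
      rw [Set.mem_setOf_eq, this]
      exact r.finite_toSet)⟩ with hpdef
  have hp : ∀ i, p.1 i = true ↔ i ∈ r := by
    intro i
    by_cases h : i ∈ r <;> simp [hpdef, h]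
  -- hypotheses for the closure lemma, on any subset of T
  have hsub : ∀ T' ⊆ T, ∀ a ∈ T', ∀ i ∈ r, (x a).1 i = true := by
    intro T' hT' a ha i hi
    have : i ∈ f a := hroot a (hT' ha) hi
    have : i ∈ ((f a) : Set ι) := this
    rw [hf a (hTS' (hT' ha))] at this
    exact this
  have hdisj : ∀ T' ⊆ T, ∀ a ∈ T', ∀ b ∈ T', a ≠ b →
      ∀ i, (x a).1 i = true → (x b).1 i = true → i ∈ r := by
    intro T' hT' a ha b hb hab i hia hib
    have h1 : i ∈ f a := by
      rw [← Finset.mem_coe, hf a (hTS' (hT' ha))]; exact hia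
    have h2 : i ∈ f b := by
      rw [← Finset.mem_coe, hf b (hTS' (hT' hb))]; exact hib
    rw [← hΔ a (hT' ha) b (hT' hb) hab]
    exact Finset.mem_inter.2 ⟨h1, h2⟩
  -- split T
  obtain ⟨β, hinit, htail⟩ := exists_split hTc
  have hclos1 : p ∈ closure (x '' (T ∩ {j | j < β})) :=
    chi_mem_closure x r hinit (hsub _ Set.inter_subset_left)
      (fun a ha b hb => hdisj _ Set.inter_subset_left a ha b hb) p hp
  have hclos2 : p ∈ closure (x '' (T ∩ {j | β ≤ j})) :=
    chi_mem_closure x r htail (hsub _ Set.inter_subset_left)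
      (fun a ha b hb => hdisj _ Set.inter_subset_left a ha b hb) p hp
  have h1 : p ∈ closure (x '' {j | j < β}) :=
    closure_mono (Set.image_mono Set.inter_subset_right) hclos1
  have h2 : p ∈ closure (x '' {j | β ≤ j}) :=
    closure_mono (Set.image_mono Set.inter_subset_right) hclos2
  have := Set.mem_inter h1 h2
  rw [hx β] at this
  exact this
end

section
/- Let X be a topological space with L(X) · F(X) ≤ κ, let A ⊆ X, and let 𝒰 be a family of open sets covering A such that closures of ≤κ-sized subsets of A are covered by ≤κ-sized subfamilies of 𝒰 and are contained in A's closure. If no subfamily of 𝒰 of size ≤ κ covers A, then X contains a free sequence of length κ⁺. In particular, if every free sequence in X has length ≤ κ and every closed subspace of X has Lindelöf degree ≤ κ, then for any set A and any open cover 𝒰 of closure(A), some ≤κ-sized subfamily of 𝒰 covers A. -/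
open Cardinal Set TopologicalSpace

universe u

noncomputable def seqAux {ι X : Type u} [LinearOrder ι] [WellFoundedLT ι]
    (pick : ∀ β : ι, (∀ γ, γ < β → X) → X) : ι → X :=
  (IsWellFounded.wf (α := ι) (r := (· < ·))).fix pick

theorem seqAux_eq {ι X : Type u} [LinearOrder ι] [WellFoundedLT ι]
    (pick : ∀ β : ι, (∀ γ, γ < β → X) → X) (β : ι) :
    seqAux pick β = pick β (fun γ _ => seqAux pick γ) :=
  WellFounded.fix_eq _ _ _

set_option maxHeartbeats 1000000 in
/-- the free-sequence construction. If `𝒰` is a family of open sets covering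
`A` such that the closure of every `≤ κ`-sized subset of `A` lies in `closure A` and is
covered by a `≤ κ`-sized subfamily of `𝒰`, and no `≤ κ`-sized subfamily of `𝒰` covers `A`,
then `X` contains a free sequence of length `κ⁺`. In particular, if every free sequence in
`X` has length `≤ κ` and every closed subspace has Lindelöf degree `≤ κ`, then for every set
`A` and every open cover `𝒰` of `closure A` some `≤ κ`-sized subfamily of `𝒰` covers `A`. -/
theorem free_sequence_construction {X : Type u} [TopologicalSpace X] (κ : Cardinal.{u})
    (hκ : ℵ₀ ≤ κ) :
    (∀ (A : Set X) (U : Set (Set X)), (∀ u ∈ U, IsOpen u) → A ⊆ ⋃₀ U →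
      (∀ B ⊆ A, #B ≤ κ → closure B ⊆ closure A ∧
        ∃ V ⊆ U, #V ≤ κ ∧ closure B ⊆ ⋃₀ V) →
      ¬ (∃ V ⊆ U, #V ≤ κ ∧ A ⊆ ⋃₀ V) →
      ∃ (x : (Order.succ κ).ord.ToType → X), IsFreeSeq x) ∧
    ((∀ (o : Ordinal.{u}) (x : o.ToType → X), IsFreeSeq x → o.card ≤ κ) →
      (∀ C : Set X, IsClosed C → ∀ U : Set (Set X), (∀ u ∈ U, IsOpen u) → C ⊆ ⋃₀ U →
        ∃ V ⊆ U, #V ≤ κ ∧ C ⊆ ⋃₀ V) →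
      ∀ (A : Set X) (U : Set (Set X)), (∀ u ∈ U, IsOpen u) → closure A ⊆ ⋃₀ U →
        ∃ V ⊆ U, #V ≤ κ ∧ A ⊆ ⋃₀ V) := by
  have main : ∀ (A : Set X) (U : Set (Set X)), (∀ u ∈ U, IsOpen u) → A ⊆ ⋃₀ U →
      (∀ B ⊆ A, #B ≤ κ → closure B ⊆ closure A ∧
        ∃ V ⊆ U, #V ≤ κ ∧ closure B ⊆ ⋃₀ V) →
      ¬ (∃ V ⊆ U, #V ≤ κ ∧ A ⊆ ⋃₀ V) →
      ∃ (x : (Order.succ κ).ord.ToType → X), IsFreeSeq x := by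
    intro A U hU hAU hcov hnc
    classical
    set ι := (Order.succ κ).ord.ToType with hidef
    -- selection of subfamilies
    have hVsel : ∀ B : Set X, ∃ V : Set (Set X), V ⊆ U ∧ #V ≤ κ ∧
        (B ⊆ A → #B ≤ κ → closure B ⊆ ⋃₀ V) := by
      intro B
      by_cases h : B ⊆ A ∧ #B ≤ κ
      · obtain ⟨-, V, hVU, hVκ, hBV⟩ := hcov B h.1 h.2
        exact ⟨V, hVU, hVκ, fun _ _ => hBV⟩
      · exact ⟨∅, empty_subset _, by simp, fun h1 h2 => absurd ⟨h1, h2⟩ h⟩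
    choose Vsel hVU hVκ hVcl using hVsel
    have hIio : ∀ i : ι, #{j : ι | j < i} ≤ κ := fun i =>
      Order.lt_succ_iff.mp (Cardinal.mk_Iio_ord_toType i)
    have hIic : ∀ i : ι, #{j : ι | j ≤ i} ≤ κ := by
      intro i
      have h1 : {j : ι | j ≤ i} ⊆ insert i {j : ι | j < i} := fun a ha =>
        (lt_or_eq_of_le ha).elim (fun h => Or.inr h) (fun h => Or.inl h)
      calc #{j : ι | j ≤ i} ≤ #(insert i {j : ι | j < i} : Set ι) := mk_le_mk_of_subset h1
        _ ≤ #{j : ι | j < i} + 1 := mk_insert_le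
        _ ≤ κ + κ := add_le_add (hIio i) (le_trans (by norm_num) hκ)
        _ = κ := Cardinal.add_eq_self hκ
    -- the family of covers at stage β given the previous points
    set W : ∀ β : ι, (∀ γ : ι, γ < β → X) → Set (Set X) := fun β g =>
      ⋃ α : {α : ι // α ≤ β}, Vsel (range fun γ : {γ : ι // γ < α.1} =>
        g γ.1 (lt_of_lt_of_le γ.2 α.2)) with hWdef
    have hWU : ∀ β g, W β g ⊆ U := fun β g => iUnion_subset fun α => hVU _
    have hWκ : ∀ β g, #(W β g) ≤ κ := by
      intro β g
      calc #(W β g) ≤ #{α : ι // α ≤ β} * ⨆ α : {α : ι // α ≤ β}, #(Vsel _) :=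
            mk_iUnion_le _
        _ ≤ κ * κ := mul_le_mul' (hIic β) (ciSup_le' fun α => hVκ _)
        _ = κ := mul_eq_self hκ
    have hpick : ∀ (β : ι) (g : ∀ γ : ι, γ < β → X), ∃ y, y ∈ A ∧ y ∉ ⋃₀ W β g := by
      intro β g
      by_contra h
      push_neg at h
      exact hnc ⟨W β g, hWU β g, hWκ β g, h⟩
    -- the free sequence
    set x : ι → X := seqAux (fun β ih => (hpick β ih).choose) with hxdef
    have hxeq : ∀ β : ι, x β = (hpick β (fun γ _ => x γ)).choose := fun β =>
      seqAux_eq _ β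
    have hxA : ∀ β : ι, x β ∈ A := fun β => by
      rw [hxeq β]; exact (hpick β (fun γ _ => x γ)).choose_spec.1
    have hxW : ∀ β : ι, x β ∉ ⋃₀ W β (fun γ _ => x γ) := fun β => by
      rw [hxeq β]; exact (hpick β (fun γ _ => x γ)).choose_spec.2
    -- the key disjointness property
    have key : ∀ i β : ι, i ≤ β → x β ∉ ⋃₀ Vsel (x '' {j | j < i}) := by
      intro i β hiβ hmem
      apply hxW β
      have hrange : (range fun γ : {γ : ι // γ < (⟨i, hiβ⟩ : {α : ι // α ≤ β}).1} =>
          x γ.1) = x '' {j | j < i} := by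
        ext y
        constructor
        · rintro ⟨⟨γ, hγ⟩, rfl⟩; exact ⟨γ, hγ, rfl⟩
        · rintro ⟨j, hj, rfl⟩; exact ⟨⟨j, hj⟩, rfl⟩
      refine sUnion_subset_sUnion ?_ hmem
      rw [← hrange]
      exact subset_iUnion (fun α : {α : ι // α ≤ β} => Vsel (range fun γ : {γ : ι // γ < α.1} =>
        x γ.1)) ⟨i, hiβ⟩
    refine ⟨x, fun i => ?_⟩
    set B := x '' {j | j < i} with hBdef
    have hBA : B ⊆ A := by rintro y ⟨j, -, rfl⟩; exact hxA j
    have hBκ : #B ≤ κ := mk_image_le.trans (hIio i)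
    have hcl : closure B ⊆ ⋃₀ Vsel B := hVcl B hBA hBκ
    have hopen : IsOpen (⋃₀ Vsel B) := isOpen_sUnion fun t ht => hU t (hVU B ht)
    have hfin : x '' {j | i ≤ j} ⊆ (⋃₀ Vsel B)ᶜ := by
      rintro y ⟨j, hj, rfl⟩; exact key i j hj
    rw [eq_empty_iff_forall_notMem]
    rintro y ⟨h1, h2⟩
    have : y ∈ (⋃₀ Vsel B)ᶜ := by
      have := closure_mono hfin h2
      rwa [closure_eq_iff_isClosed.mpr hopen.isClosed_compl] at this
    exact this (hcl h1)
  refine ⟨main, ?_⟩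
  intro hF hL A U hU hclU
  by_contra h
  obtain ⟨x, hx⟩ := main A U hU (fun a ha => hclU (subset_closure ha))
    (fun B hBA hBκ => ⟨closure_mono hBA, hL (closure B) isClosed_closure U hU
      ((closure_mono hBA).trans hclU)⟩) h
  have hcard := hF _ x hx
  rw [Cardinal.card_ord] at hcard
  exact lt_irrefl κ (Order.succ_le_iff.mp hcard)
end
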